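/- arXiv:1008.2608 — 3 statements merged into one kernel-verified Lean document; each statement's English description precedes it below -/
import Mathlib

section
/- Let Π be a polyhedral complex in ℝⁿ whose support |Π| is connected and satisfies the Minkowski-Weyl condition, and let Λ₁, Λ₂ ∈ Π. Then c(Λ₁) ∩ c(Λ₂) = c(Λ₁ ∩ Λ₂) if Λ₁ ∩ Λ₂ ≠ ∅, and c(Λ₁) ∩ c(Λ₂) = (rec(Λ₁) ∩ rec(Λ₂)) × {0} if Λ₁ ∩ Λ₂ = ∅. -/
open Set Pointwise

variable {E : Type*} [NormedAddCommGroup E] [NormedSpace ℝ E]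

/-- A polyhedron: an intersection of finitely many closed halfspaces. -/
def IsPolyhedron (S : Set E) : Prop :=
  ∃ (m : ℕ) (f : Fin m → E →ₗ[ℝ] ℝ) (b : Fin m → ℝ), S = {x | ∀ i, f i x ≤ b i}

/-- A polytope: the convex hull of a (nonempty) finite set of points. -/
def IsPolytope (S : Set E) : Prop :=
  ∃ F : Finset E, F.Nonempty ∧ S = convexHull ℝ (F : Set E)

/-- A convex polyhedral cone: the set of nonnegative combinations of finitely
many vectors. -/
def IsPolyhedralCone (S : Set E) : Prop :=
  ∃ F : Finset E, S = {x | ∃ c : E → ℝ, (∀ v, 0 ≤ c v) ∧ x = ∑ v ∈ F, c v • v}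

/-- The local recession cone of `S` at `p`:
`{u | p + t • u ∈ S for all t ≥ 0}`. -/
def locRec (S : Set E) (p : E) : Set E := {u | ∀ t : ℝ, 0 ≤ t → p + t • u ∈ S}

/-- The recession cone of a set: the intersection of all local recession
cones. -/
def recSet (S : Set E) : Set E := ⋂ p ∈ S, locRec S p

/-- The recession cone of a polyhedron: `{u | S + u ⊆ S}`. -/
def recPoly (S : Set E) : Set E := {u | ∀ x ∈ S, x + u ∈ S}

/-- `S_x`: the set of points of `S` minimizing the linear functional `x`. -/
def faceSet (S : Set E) (x : E →ₗ[ℝ] ℝ) : Set E := {u ∈ S | ∀ v ∈ S, x u ≤ x v}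

/-- A face of `S`: a nonempty subset of the form `S_x`. -/
def IsFaceOf (F S : Set E) : Prop := F.Nonempty ∧ ∃ x : E →ₗ[ℝ] ℝ, F = faceSet S x

/-- A polyhedral complex: a nonempty finite collection of (nonempty) polyhedra,
closed under taking faces, in which any two members that meet intersect in a
common face. -/
def IsPolyComplex (P : Set (Set E)) : Prop :=
  P.Nonempty ∧ P.Finite ∧ (∀ S ∈ P, IsPolyhedron S ∧ S.Nonempty) ∧
  (∀ S ∈ P, ∀ F : Set E, IsFaceOf F S → F ∈ P) ∧
  ∀ S ∈ P, ∀ T ∈ P, (S ∩ T).Nonempty → IsFaceOf (S ∩ T) S ∧ IsFaceOf (S ∩ T) T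

/-- The support of a collection of sets. -/
def polySupport (P : Set (Set E)) : Set E := ⋃ S ∈ P, S

/-- The Minkowski-Weyl condition: every local recession cone equals the global
recession cone. -/
def MWCondition (S : Set E) : Prop := ∀ p ∈ S, locRec S p = recSet S

/-- A conic polyhedral complex: a polyhedral complex all of whose members are
convex polyhedral cones. -/
def IsConicPolyComplex (P : Set (Set E)) : Prop :=
  IsPolyComplex P ∧ ∀ S ∈ P, IsPolyhedralCone S

/-- Strongly convex: contains no affine line. -/
def StronglyConvexSet (S : Set E) : Prop :=
  ¬ ∃ p d : E, d ≠ 0 ∧ ∀ t : ℝ, p + t • d ∈ S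

/-- A fan: a conic polyhedral complex all of whose members are strongly
convex. -/
def IsFan (P : Set (Set E)) : Prop :=
  IsConicPolyComplex P ∧ ∀ S ∈ P, StronglyConvexSet S

/-- The recession of a complex: the collection of recession cones of its
members. -/
def recComplex (P : Set (Set E)) : Set (Set E) := {C | ∃ Λ ∈ P, C = recPoly Λ}

/-- The cone `c(S)` over a set `S ⊆ E`, inside `E × ℝ`: the closure of
`{t • (u, 1) | u ∈ S, t > 0}`. -/
def coneOver (S : Set E) : Set (E × ℝ) :=
  closure {y | ∃ u ∈ S, ∃ t : ℝ, 0 < t ∧ y = t • (u, (1 : ℝ))}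

/-- The open cone `c°(S)` over `S`: `{t • (u, 1) | u ∈ S, t > 0}`. -/
def openCone (S : Set E) : Set (E × ℝ) :=
  {y | ∃ u ∈ S, ∃ t : ℝ, 0 < t ∧ y = t • (u, (1 : ℝ))}

/-- The cone `c(Π)` of a complex: the cones over its members together with the
recession cones of its members placed at height `0`. -/
def coneComplex (P : Set (Set E)) : Set (Set (E × ℝ)) :=
  {C | ∃ Λ ∈ P, C = coneOver Λ} ∪
  {C | ∃ Λ ∈ P, C = (recPoly Λ) ×ˢ ({0} : Set ℝ)}

/-- `aff` of a conic complex in `E × ℝ`: the nonempty intersections of its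
members with the hyperplane `E × {1}`, regarded as subsets of `E`. -/
def affOf (P : Set (Set (E × ℝ))) : Set (Set E) :=
  {L | L.Nonempty ∧ ∃ σ ∈ P, L = {u | (u, (1 : ℝ)) ∈ σ}}

/-- A polyhedral set: a finite union of polyhedra. -/
def IsPolyhedralSet (S : Set E) : Prop :=
  ∃ (k : ℕ) (f : Fin k → Set E), (∀ i, IsPolyhedron (f i)) ∧ S = ⋃ i, f i

/-- A finite union of polytopes. -/
def IsFiniteUnionOfPolytopes (S : Set E) : Prop :=
  ∃ (k : ℕ) (f : Fin k → Set E), (∀ i, IsPolytope (f i)) ∧ S = ⋃ i, f i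

/- ### Auxiliary lemmas -/

lemma slope_le_zero' {c d r : ℝ} (h : ∀ k : ℕ, c + (k : ℝ) * r ≤ d) : r ≤ 0 := by
  by_contra hr
  push_neg at hr
  obtain ⟨k, hk⟩ := exists_nat_gt ((d - c) / r)
  have hkk := h k
  rw [div_lt_iff₀ hr] at hk
  linarith

lemma recPoly_iter' {S : Set E} {u x : E} (hu : u ∈ recPoly S) (hx : x ∈ S) :
    ∀ k : ℕ, x + (k : ℝ) • u ∈ S := by
  intro k
  induction k with
  | zero => simpa using hx
  | succ k ih =>
      have h := hu _ ih
      have : x + ((k : ℝ) + 1) • u = (x + (k : ℝ) • u) + u := by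
        rw [add_smul, one_smul, ← add_assoc]
      push_cast
      rw [this]
      exact h

lemma recPoly_poly' {m : ℕ} {f : Fin m → E →ₗ[ℝ] ℝ} {b : Fin m → ℝ}
    (hne : {x : E | ∀ i, f i x ≤ b i}.Nonempty) :
    recPoly {x : E | ∀ i, f i x ≤ b i} = {u | ∀ i, f i u ≤ 0} := by
  ext u
  constructor
  · intro hu i
    obtain ⟨x, hx⟩ := hne
    refine slope_le_zero' (c := f i x) (d := b i) fun k => ?_
    have h := recPoly_iter' hu hx k i
    simpa [map_add, map_smul, smul_eq_mul] using h
  · intro hu x hx i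
    have h1 := hx i
    have h2 := hu i
    simp only [Set.mem_setOf_eq, map_add]
    linarith

lemma mem_recPoly_of_iter {S : Set E} (hS : IsPolyhedron S) {x u : E} (hx : x ∈ S)
    (h : ∀ k : ℕ, x + (k : ℝ) • u ∈ S) : u ∈ recPoly S := by
  obtain ⟨m, f, b, rfl⟩ := hS
  rw [recPoly_poly' ⟨x, hx⟩]
  intro i
  refine slope_le_zero' (c := f i x) (d := b i) fun k => ?_
  have hh := h k i
  simpa [map_add, map_smul, smul_eq_mul] using hh

lemma recPoly_inter' {S T : Set E} (hS : IsPolyhedron S) (hT : IsPolyhedron T)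
    (hne : (S ∩ T).Nonempty) : recPoly (S ∩ T) = recPoly S ∩ recPoly T := by
  obtain ⟨x, hxS, hxT⟩ := hne
  ext u
  constructor
  · intro hu
    have hk := recPoly_iter' hu ⟨hxS, hxT⟩
    exact ⟨mem_recPoly_of_iter hS hxS fun k => (hk k).1,
      mem_recPoly_of_iter hT hxT fun k => (hk k).2⟩
  · rintro ⟨hu1, hu2⟩ y ⟨hy1, hy2⟩
    exact ⟨hu1 y hy1, hu2 y hy2⟩

lemma isPolyhedron_inter {S T : Set E} (hS : IsPolyhedron S) (hT : IsPolyhedron T) :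
    IsPolyhedron (S ∩ T) := by
  obtain ⟨m, f, b, rfl⟩ := hS
  obtain ⟨m', f', b', rfl⟩ := hT
  refine ⟨m + m', Fin.append f f', Fin.append b b', ?_⟩
  ext x
  constructor
  · rintro ⟨hx1, hx2⟩ i
    refine Fin.addCases (fun j => ?_) (fun j => ?_) i
    · simpa [Fin.append_left] using hx1 j
    · simpa [Fin.append_right] using hx2 j
  · intro hx
    constructor
    · intro j
      have := hx (Fin.castAdd m' j)
      simpa [Fin.append_left] using this
    · intro j
      have := hx (Fin.natAdd m j)
      simpa [Fin.append_right] using this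

lemma openCone_snd_pos {S : Set E} {p : E × ℝ} (hp : p ∈ openCone S) : 0 < p.2 := by
  obtain ⟨u, _, t, ht, rfl⟩ := hp
  simpa using ht

lemma openCone_inter' (S T : Set E) : openCone S ∩ openCone T = openCone (S ∩ T) := by
  ext p
  constructor
  · rintro ⟨⟨u, hu, t, ht, rfl⟩, ⟨v, hv, s, hs, heq⟩⟩
    have h2 : t = s := by
      have := congrArg Prod.snd heq
      simpa using this
    subst h2
    have h1 : u = v := by
      have h := congrArg Prod.fst heq
      simp only [Prod.smul_fst] at h
      exact smul_right_injective E (ne_of_gt ht) h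
    exact ⟨u, ⟨hu, h1 ▸ hv⟩, t, ht, rfl⟩
  · rintro ⟨u, ⟨hu1, hu2⟩, t, ht, rfl⟩
    exact ⟨⟨u, hu1, t, ht, rfl⟩, ⟨u, hu2, t, ht, rfl⟩⟩

lemma openCone_empty : openCone (∅ : Set E) = ∅ := by
  ext p
  simp [openCone]

lemma coneOver_eq_union {E : Type*} [NormedAddCommGroup E] [NormedSpace ℝ E]
    [FiniteDimensional ℝ E] {S : Set E} (hS : IsPolyhedron S) (hne : S.Nonempty) :
    coneOver S = openCone S ∪ (recPoly S) ×ˢ ({0} : Set ℝ) := by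
  obtain ⟨m, f, b, rfl⟩ := hS
  set Λ : Set E := {x | ∀ i, f i x ≤ b i} with hΛ
  have hH_closed : IsClosed {p : E × ℝ | 0 ≤ p.2 ∧ ∀ i, f i p.1 ≤ p.2 * b i} := by
    have h1 : IsClosed {p : E × ℝ | 0 ≤ p.2} := isClosed_le continuous_const continuous_snd
    have h2 : ∀ i : Fin m, IsClosed {p : E × ℝ | f i p.1 ≤ p.2 * b i} := fun i =>
      isClosed_le ((f i).continuous_of_finiteDimensional.comp continuous_fst)
        (continuous_snd.mul continuous_const)
    have heq : {p : E × ℝ | 0 ≤ p.2 ∧ ∀ i, f i p.1 ≤ p.2 * b i} =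
        {p : E × ℝ | 0 ≤ p.2} ∩ ⋂ i, {p : E × ℝ | f i p.1 ≤ p.2 * b i} := by
      ext p; simp [Set.mem_iInter]
    rw [heq]
    exact h1.inter (isClosed_iInter h2)
  have hunion : openCone Λ ∪ (recPoly Λ) ×ˢ ({0} : Set ℝ) =
      {p : E × ℝ | 0 ≤ p.2 ∧ ∀ i, f i p.1 ≤ p.2 * b i} := by
    rw [hΛ, recPoly_poly' hne]
    ext p
    constructor
    · rintro (⟨u, hu, t, ht, rfl⟩ | hp)
      · constructor
        · simpa using ht.le
        · intro i
          simp only [Prod.smul_fst, Prod.smul_snd, smul_eq_mul, mul_one, map_smul]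
          exact mul_le_mul_of_nonneg_left (hu i) ht.le
      · obtain ⟨hp1, hp2⟩ := hp
        simp only [Set.mem_singleton_iff] at hp2
        constructor
        · rw [hp2]
        · intro i
          rw [hp2, zero_mul]
          exact hp1 i
    · rintro ⟨h0, hi⟩
      rcases lt_or_eq_of_le h0 with hlt | heq0
      · left
        refine ⟨p.2⁻¹ • p.1, fun i => ?_, p.2, hlt, ?_⟩
        · rw [map_smul, smul_eq_mul, inv_mul_le_iff₀ hlt]
          exact hi i
        · rw [Prod.ext_iff]
          constructor
          · simp [smul_smul, mul_inv_cancel₀ (ne_of_gt hlt)]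
          · simp
      · right
        refine ⟨fun i => ?_, by simp [← heq0]⟩
        have := hi i
        rw [← heq0, zero_mul] at this
        exact this
  refine Set.Subset.antisymm ?_ ?_
  · intro p hp
    rw [hunion]
    exact closure_minimal (by rw [← hunion]; exact Set.subset_union_left) hH_closed hp
  · rintro p (hp | hp)
    · exact subset_closure hp
    · obtain ⟨hp1, hp2⟩ := hp
      simp only [Set.mem_singleton_iff] at hp2
      obtain ⟨x, hx⟩ := hne
      have hmem : ∀ k : ℕ, ((k : ℝ) + 1)⁻¹ • ((x + ((k : ℝ) + 1) • p.1, (1 : ℝ)) : E × ℝ) ∈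
          {y : E × ℝ | ∃ u ∈ Λ, ∃ t : ℝ, 0 < t ∧ y = t • (u, (1 : ℝ))} := by
        intro k
        refine ⟨x + ((k : ℝ) + 1) • p.1, ?_, ((k : ℝ) + 1)⁻¹, by positivity, rfl⟩
        have := recPoly_iter' hp1 hx (k + 1)
        push_cast at this
        exact this
      have htend : Filter.Tendsto
          (fun k : ℕ => ((k : ℝ) + 1)⁻¹ • ((x + ((k : ℝ) + 1) • p.1, (1 : ℝ)) : E × ℝ))
          Filter.atTop (nhds p) := by
        have h1 : Filter.Tendsto (fun k : ℕ => ((k : ℝ) + 1)⁻¹) Filter.atTop (nhds 0) := by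
          simpa [one_div] using tendsto_one_div_add_atTop_nhds_zero_nat (𝕜 := ℝ)
        have hfst : Filter.Tendsto (fun k : ℕ => ((k : ℝ) + 1)⁻¹ • x + p.1)
            Filter.atTop (nhds p.1) := by
          have := (h1.smul_const x).add_const p.1
          simpa using this
        have heq : ∀ k : ℕ, ((k : ℝ) + 1)⁻¹ • ((x + ((k : ℝ) + 1) • p.1, (1 : ℝ)) : E × ℝ) =
            ((((k : ℝ) + 1)⁻¹ • x + p.1, ((k : ℝ) + 1)⁻¹) : E × ℝ) := by
          intro k
          have hk : ((k : ℝ) + 1) ≠ 0 := by positivity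
          rw [Prod.ext_iff]
          constructor
          · simp [smul_add, smul_smul, inv_mul_cancel₀ hk]
          · simp
        simp only [heq]
        rw [show p = ((p.1, (0 : ℝ)) : E × ℝ) by rw [Prod.ext_iff]; exact ⟨rfl, hp2⟩]
        exact hfst.prodMk_nhds h1
      exact mem_closure_of_tendsto htend (Filter.Eventually.of_forall hmem)

lemma cone_union_inter {o₁ o₂ : Set (E × ℝ)} {r₁ r₂ : Set E}
    (h₁ : ∀ p ∈ o₁, (0 : ℝ) < p.2) (h₂ : ∀ p ∈ o₂, (0 : ℝ) < p.2) :
    (o₁ ∪ r₁ ×ˢ ({0} : Set ℝ)) ∩ (o₂ ∪ r₂ ×ˢ ({0} : Set ℝ)) =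
      (o₁ ∩ o₂) ∪ (r₁ ∩ r₂) ×ˢ ({0} : Set ℝ) := by
  ext p
  simp only [Set.mem_inter_iff, Set.mem_union, Set.mem_prod, Set.mem_singleton_iff]
  constructor
  · rintro ⟨(ha | ⟨ha, ha0⟩), (hb | ⟨hb, hb0⟩)⟩
    · exact Or.inl ⟨ha, hb⟩
    · exact absurd (h₁ _ ha) (by rw [hb0]; exact lt_irrefl 0)
    · exact absurd (h₂ _ hb) (by rw [ha0]; exact lt_irrefl 0)
    · exact Or.inr ⟨⟨ha, hb⟩, ha0⟩
  · rintro (⟨ha, hb⟩ | ⟨⟨ha, hb⟩, h0⟩)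
    · exact ⟨Or.inl ha, Or.inl hb⟩
    · exact ⟨Or.inr ⟨ha, h0⟩, Or.inr ⟨hb, h0⟩⟩

/-- for a polyhedral complex with connected support
satisfying the Minkowski-Weyl condition and members `Λ₁, Λ₂`, the intersection
`c(Λ₁) ∩ c(Λ₂)` is `c(Λ₁ ∩ Λ₂)` when `Λ₁ ∩ Λ₂ ≠ ∅`, and
`(rec(Λ₁) ∩ rec(Λ₂)) × {0}` otherwise. -/
theorem statement14 {n : ℕ} (P : Set (Set (Fin n → ℝ))) (hP : IsPolyComplex P)
    (hconn : IsConnected (polySupport P)) (hMW : MWCondition (polySupport P))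
    (Λ₁ Λ₂ : Set (Fin n → ℝ)) (h₁ : Λ₁ ∈ P) (h₂ : Λ₂ ∈ P) :
    ((Λ₁ ∩ Λ₂).Nonempty → coneOver Λ₁ ∩ coneOver Λ₂ = coneOver (Λ₁ ∩ Λ₂)) ∧
    (Λ₁ ∩ Λ₂ = ∅ → coneOver Λ₁ ∩ coneOver Λ₂ =
      (recPoly Λ₁ ∩ recPoly Λ₂) ×ˢ ({0} : Set ℝ)) := by
  obtain ⟨hp1, hne1⟩ := hP.2.2.1 Λ₁ h₁
  obtain ⟨hp2, hne2⟩ := hP.2.2.1 Λ₂ h₂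
  have c1 := coneOver_eq_union hp1 hne1
  have c2 := coneOver_eq_union hp2 hne2
  constructor
  · intro hne
    have c12 := coneOver_eq_union (isPolyhedron_inter hp1 hp2) hne
    rw [c1, c2, c12, recPoly_inter' hp1 hp2 hne, ← openCone_inter']
    exact cone_union_inter (fun p hp => openCone_snd_pos hp) fun p hp => openCone_snd_pos hp
  · intro hempty
    rw [c1, c2,
      cone_union_inter (fun p hp => openCone_snd_pos hp) fun p hp => openCone_snd_pos hp,
      openCone_inter', hempty, openCone_empty, Set.empty_union]
end

section
/- There exists a polyhedral complex Π in ℝ³ such that rec(Π) = {rec(Λ) | Λ ∈ Π} is a fan but rec(|Π|) is a proper subset of ⋃_{Λ∈Π} rec(Λ). Concretely, one may take Π to be all faces of the polyhedra {(x₁,x₂,0) | x₁ ≥ x₂ ≥ 0} and {(x₁,x₂,1) | x₂ ≥ x₁ ≥ 0}. -/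
open Set Pointwise

variable {E : Type*} [NormedAddCommGroup E] [NormedSpace ℝ E]

section Aux

theorem isFaceOf_self {S : Set E} (h : S.Nonempty) : IsFaceOf S S :=
  ⟨h, 0, by ext u; simp [faceSet]⟩

theorem IsFaceOf.subset {F S : Set E} (h : IsFaceOf F S) : F ⊆ S := by
  obtain ⟨-, x, rfl⟩ := h; exact fun u hu => hu.1

theorem point_faces {q : E} {F : Set E} : IsFaceOf F {q} ↔ F = {q} := by
  constructor
  · intro h
    rcases (Set.subset_singleton_iff_eq.1 h.subset) with h' | h'
    · exact absurd h' (Set.nonempty_iff_ne_empty.1 h.1)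
    · exact h'
  · rintro rfl; exact isFaceOf_self ⟨q, rfl⟩

theorem ray_faces {q g : E} {φ : E →ₗ[ℝ] ℝ} (hφ : φ g = 1)
    {F : Set E} (S : Set E) (hS : S = {v | ∃ s : ℝ, 0 ≤ s ∧ v = q + s • g}) :
    IsFaceOf F S ↔ F = S ∨ F = {q} := by
  subst hS
  have hqS : q ∈ {v | ∃ s : ℝ, 0 ≤ s ∧ v = q + s • g} := ⟨0, le_refl _, by simp⟩
  constructor
  · rintro ⟨hne, l, rfl⟩
    set S : Set E := {v | ∃ s : ℝ, 0 ≤ s ∧ v = q + s • g} with hSdef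
    have hval : ∀ s : ℝ, l (q + s • g) = l q + s * l g := by
      intro s; rw [map_add, map_smul]; rfl
    obtain ⟨p, hpS, hpmin⟩ := hne
    obtain ⟨s₀, hs₀, rfl⟩ := hpS
    have h1 : l q + s₀ * l g ≤ l q := by have := hpmin q hqS; rwa [hval] at this
    have h2 : l q + s₀ * l g ≤ l q + (2 * s₀) * l g := by
      have := hpmin (q + (2 * s₀) • g) ⟨2 * s₀, by linarith, rfl⟩
      rwa [hval, hval] at this
    have hmin : l (q + s₀ • g) = l q := by rw [hval]; nlinarith
    have hgn : 0 ≤ l g := by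
      have := hpmin (q + (1:ℝ) • g) ⟨1, zero_le_one, rfl⟩
      rw [hval, hval] at this; nlinarith
    rcases eq_or_lt_of_le hgn with ha | ha
    · left
      ext u
      constructor
      · exact fun hu => hu.1
      · intro hu
        refine ⟨hu, fun v hv => ?_⟩
        obtain ⟨s, hs, rfl⟩ := hu
        obtain ⟨s', hs', rfl⟩ := hv
        rw [hval, hval, ← ha]; ring_nf; rfl
    · right
      ext u
      constructor
      · rintro ⟨⟨s, hs, rfl⟩, hmin'⟩
        have := hmin' q hqS
        rw [hval] at this
        have : s = 0 := by nlinarith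
        simp [this]
      · rintro rfl
        refine ⟨hqS, fun v hv => ?_⟩
        obtain ⟨s, hs, rfl⟩ := hv
        rw [hval]; nlinarith
  · rintro (rfl | rfl)
    · exact isFaceOf_self ⟨q, hqS⟩
    · refine ⟨⟨q, rfl⟩, φ, ?_⟩
      ext u
      constructor
      · rintro rfl
        refine ⟨hqS, fun v hv => ?_⟩
        obtain ⟨s, hs, rfl⟩ := hv
        rw [map_add, map_smul, smul_eq_mul, hφ]; nlinarith
      · rintro ⟨⟨s, hs, rfl⟩, hm⟩
        have := hm q hqS
        rw [map_add, map_smul, smul_eq_mul, hφ] at this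
        have : s = 0 := by linarith
        simp [this]


set_option maxHeartbeats 1000000 in
theorem cone2_faces {q g1 g2 : E} {φ1 φ2 : E →ₗ[ℝ] ℝ}
    (h11 : φ1 g1 = 1) (h12 : φ1 g2 = 0) (h21 : φ2 g1 = 0) (h22 : φ2 g2 = 1)
    {F : Set E} (S : Set E)
    (hS : S = {v | ∃ s t : ℝ, 0 ≤ s ∧ 0 ≤ t ∧ v = q + s • g1 + t • g2}) :
    IsFaceOf F S ↔ F = S ∨ F = {v | ∃ s : ℝ, 0 ≤ s ∧ v = q + s • g1} ∨
      F = {v | ∃ t : ℝ, 0 ≤ t ∧ v = q + t • g2} ∨ F = {q} := by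
  subst hS
  set S : Set E := {v | ∃ s t : ℝ, 0 ≤ s ∧ 0 ≤ t ∧ v = q + s • g1 + t • g2} with hSdef
  have hmem : ∀ s t : ℝ, 0 ≤ s → 0 ≤ t → q + s • g1 + t • g2 ∈ S :=
    fun s t hs ht => ⟨s, t, hs, ht, rfl⟩
  have hqS : q ∈ S := by simpa using hmem 0 0 le_rfl le_rfl
  have hg1 : ∀ s : ℝ, 0 ≤ s → q + s • g1 ∈ S := by
    intro s hs; simpa using hmem s 0 hs le_rfl
  have hg2 : ∀ t : ℝ, 0 ≤ t → q + t • g2 ∈ S := by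
    intro t ht; simpa using hmem 0 t le_rfl ht
  constructor
  · rintro ⟨hne, l, rfl⟩
    have hval : ∀ s t : ℝ, l (q + s • g1 + t • g2) = l q + s * l g1 + t * l g2 := by
      intro s t; rw [map_add, map_add, map_smul, map_smul]; rfl
    have hval1 : ∀ s : ℝ, l (q + s • g1) = l q + s * l g1 := by
      intro s; rw [map_add, map_smul]; rfl
    obtain ⟨p, hpS, hpmin⟩ := hne
    obtain ⟨s₀, t₀, hs₀, ht₀, rfl⟩ := hpS
    set a := l g1 with ha
    set b := l g2 with hb
    have hminq : l q + s₀ * a + t₀ * b ≤ l q := by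
      have := hpmin q hqS; rwa [hval] at this
    have hA : 0 ≤ a := by
      by_contra hA
      push_neg at hA
      have hane : a ≠ 0 := ne_of_lt hA
      set T : ℝ := (s₀ * a + t₀ * b - 1) / a with hT
      have hT0 : 0 ≤ T := le_of_lt (div_pos_iff.2 (Or.inr ⟨by nlinarith, hA⟩))
      have := hpmin (q + T • g1 + (0:ℝ) • g2) (hmem T 0 hT0 le_rfl)
      rw [hval, hval] at this
      have hTa : T * a = s₀ * a + t₀ * b - 1 := div_mul_cancel₀ _ hane
      linarith
    have hB : 0 ≤ b := by
      by_contra hB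
      push_neg at hB
      have hbne : b ≠ 0 := ne_of_lt hB
      set T : ℝ := (s₀ * a + t₀ * b - 1) / b with hT
      have hT0 : 0 ≤ T := le_of_lt (div_pos_iff.2 (Or.inr ⟨by nlinarith, hB⟩))
      have := hpmin (q + (0:ℝ) • g1 + T • g2) (hmem 0 T le_rfl hT0)
      rw [hval, hval] at this
      have hTb : T * b = s₀ * a + t₀ * b - 1 := div_mul_cancel₀ _ hbne
      linarith
    have hs₀a : s₀ * a = 0 :=
      le_antisymm (by nlinarith [mul_nonneg ht₀ hB]) (mul_nonneg hs₀ hA)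
    have ht₀b : t₀ * b = 0 :=
      le_antisymm (by nlinarith [mul_nonneg hs₀ hA]) (mul_nonneg ht₀ hB)
    have hminv : l (q + s₀ • g1 + t₀ • g2) = l q := by rw [hval]; linarith
    -- membership in the face iff l v = l q
    have hface : ∀ u, u ∈ faceSet S l ↔ ∃ s t : ℝ, 0 ≤ s ∧ 0 ≤ t ∧
        s * a + t * b = 0 ∧ u = q + s • g1 + t • g2 := by
      intro u
      constructor
      · rintro ⟨⟨s, t, hs, ht, rfl⟩, hm⟩
        have h1 := hm q hqS
        rw [hval] at h1
        have h2 := hpmin _ (hmem s t hs ht)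
        rw [hval, hval] at h2
        exact ⟨s, t, hs, ht, by linarith, rfl⟩
      · rintro ⟨s, t, hs, ht, hzero, rfl⟩
        refine ⟨hmem s t hs ht, fun v hv => ?_⟩
        obtain ⟨s', t', hs', ht', rfl⟩ := hv
        rw [hval, hval]
        nlinarith [mul_nonneg hs' hA, mul_nonneg ht' hB]
    rcases eq_or_lt_of_le hA with hA0 | hA0 <;> rcases eq_or_lt_of_le hB with hB0 | hB0
    · left
      ext u; rw [hface]
      constructor
      · rintro ⟨s, t, hs, ht, -, rfl⟩; exact hmem s t hs ht
      · rintro ⟨s, t, hs, ht, rfl⟩; exact ⟨s, t, hs, ht, by nlinarith, rfl⟩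
    · right; left
      ext u; rw [hface]
      constructor
      · rintro ⟨s, t, hs, ht, hz, rfl⟩
        have htb : t * b = 0 := by nlinarith
        have : t = 0 := by
          rcases mul_eq_zero.1 htb with h | h
          · exact h
          · exact absurd h (ne_of_gt hB0)
        exact ⟨s, hs, by simp [this]⟩
      · rintro ⟨s, hs, rfl⟩
        exact ⟨s, 0, hs, le_rfl, by nlinarith, by simp⟩
    · right; right; left
      ext u; rw [hface]
      constructor
      · rintro ⟨s, t, hs, ht, hz, rfl⟩
        have hsa : s * a = 0 := by nlinarith
        have : s = 0 := by
          rcases mul_eq_zero.1 hsa with h | h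
          · exact h
          · exact absurd h (ne_of_gt hA0)
        exact ⟨t, ht, by simp [this]⟩
      · rintro ⟨t, ht, rfl⟩
        exact ⟨0, t, le_rfl, ht, by nlinarith, by simp⟩
    · right; right; right
      ext u; rw [hface]
      constructor
      · rintro ⟨s, t, hs, ht, hz, rfl⟩
        have hsa : s * a = 0 :=
          le_antisymm (by nlinarith [mul_nonneg ht hB0.le]) (mul_nonneg hs hA0.le)
        have htb : t * b = 0 :=
          le_antisymm (by nlinarith [mul_nonneg hs hA0.le]) (mul_nonneg ht hB0.le)
        have hs0 : s = 0 := by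
          rcases mul_eq_zero.1 hsa with h | h
          · exact h
          · exact absurd h (ne_of_gt hA0)
        have ht0 : t = 0 := by
          rcases mul_eq_zero.1 htb with h | h
          · exact h
          · exact absurd h (ne_of_gt hB0)
        simp [hs0, ht0]
      · rintro rfl
        exact ⟨0, 0, le_rfl, le_rfl, by ring, by simp⟩
  · have hfs : ∀ (l : E →ₗ[ℝ] ℝ), 0 ≤ l g1 → 0 ≤ l g2 →
        faceSet S l = {u | ∃ s t : ℝ, 0 ≤ s ∧ 0 ≤ t ∧
          s * l g1 + t * l g2 = 0 ∧ u = q + s • g1 + t • g2} := by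
      intro l hl1 hl2
      have hval : ∀ s t : ℝ, l (q + s • g1 + t • g2) = l q + s * l g1 + t * l g2 := by
        intro s t; rw [map_add, map_add, map_smul, map_smul]; rfl
      ext u
      constructor
      · rintro ⟨⟨s, t, hs, ht, rfl⟩, hm⟩
        have h1 := hm q hqS
        rw [hval] at h1
        refine ⟨s, t, hs, ht, ?_, rfl⟩
        nlinarith [mul_nonneg hs hl1, mul_nonneg ht hl2]
      · rintro ⟨s, t, hs, ht, hz, rfl⟩
        refine ⟨hmem s t hs ht, fun v hv => ?_⟩
        obtain ⟨s', t', hs', ht', rfl⟩ := hv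
        rw [hval, hval]
        nlinarith [mul_nonneg hs' hl1, mul_nonneg ht' hl2]
    rintro (rfl | rfl | rfl | rfl)
    · exact isFaceOf_self ⟨q, hqS⟩
    · refine ⟨⟨q, 0, le_rfl, by simp⟩, φ2, ?_⟩
      rw [hfs φ2 (by rw [h21]) (by rw [h22]; norm_num)]
      ext u
      simp only [Set.mem_setOf_eq, h21, h22]
      constructor
      · rintro ⟨s, hs, rfl⟩
        exact ⟨s, 0, hs, le_rfl, by ring, by simp⟩
      · rintro ⟨s, t, hs, ht, hz, rfl⟩
        have : t = 0 := by linarith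
        exact ⟨s, hs, by simp [this]⟩
    · refine ⟨⟨q, 0, le_rfl, by simp⟩, φ1, ?_⟩
      rw [hfs φ1 (by rw [h11]; norm_num) (by rw [h12])]
      ext u
      simp only [Set.mem_setOf_eq, h11, h12]
      constructor
      · rintro ⟨t, ht, rfl⟩
        exact ⟨0, t, le_rfl, ht, by ring, by simp⟩
      · rintro ⟨s, t, hs, ht, hz, rfl⟩
        have : s = 0 := by linarith
        exact ⟨t, ht, by simp [this]⟩
    · refine ⟨⟨q, rfl⟩, φ1 + φ2, ?_⟩
      have e1 : (φ1 + φ2) g1 = 1 := by rw [LinearMap.add_apply, h11, h21]; ring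
      have e2 : (φ1 + φ2) g2 = 1 := by rw [LinearMap.add_apply, h12, h22]; ring
      rw [hfs (φ1 + φ2) (by rw [e1]; norm_num) (by rw [e2]; norm_num)]
      ext u
      simp only [Set.mem_setOf_eq, e1, e2, Set.mem_singleton_iff]
      constructor
      · rintro rfl
        exact ⟨0, 0, le_rfl, le_rfl, by ring, by simp⟩
      · rintro ⟨s, t, hs, ht, hz, rfl⟩
        have hs0 : s = 0 := by linarith
        have ht0 : t = 0 := by linarith
        rw [hs0, ht0]
        simp

end Aux


namespace St16

/-! ### Concrete sets in `ℝ³` -/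

noncomputable def pj (i : Fin 3) : (Fin 3 → ℝ) →ₗ[ℝ] ℝ := LinearMap.proj i

def gE0 : Fin 3 → ℝ := fun i => if i = 0 then 1 else 0
def gE1 : Fin 3 → ℝ := fun i => if i = 1 then 1 else 0
def gD : Fin 3 → ℝ := fun i => if i = 2 then 0 else 1
def q2 : Fin 3 → ℝ := fun i => if i = 2 then 1 else 0

def sL1 : Set (Fin 3 → ℝ) := {x | 0 ≤ x 1 ∧ x 1 ≤ x 0 ∧ x 2 = 0}
def sR0 : Set (Fin 3 → ℝ) := {x | 0 ≤ x 0 ∧ x 1 = 0 ∧ x 2 = 0}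
def sRD : Set (Fin 3 → ℝ) := {x | x 0 = x 1 ∧ 0 ≤ x 1 ∧ x 2 = 0}
def sZ : Set (Fin 3 → ℝ) := {0}
def sL2 : Set (Fin 3 → ℝ) := {x | 0 ≤ x 0 ∧ x 0 ≤ x 1 ∧ x 2 = 1}
def sR1' : Set (Fin 3 → ℝ) := {x | x 0 = 0 ∧ 0 ≤ x 1 ∧ x 2 = 1}
def sRD' : Set (Fin 3 → ℝ) := {x | x 0 = x 1 ∧ 0 ≤ x 1 ∧ x 2 = 1}
def sZ' : Set (Fin 3 → ℝ) := {q2}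
def sL2' : Set (Fin 3 → ℝ) := {x | 0 ≤ x 0 ∧ x 0 ≤ x 1 ∧ x 2 = 0}
def sR1 : Set (Fin 3 → ℝ) := {x | x 0 = 0 ∧ 0 ≤ x 1 ∧ x 2 = 0}

/-! ### Parametric descriptions -/

theorem hL1 : sL1 = {v | ∃ s t : ℝ, 0 ≤ s ∧ 0 ≤ t ∧ v = 0 + s • gE0 + t • gD} := by
  ext x
  constructor
  · rintro ⟨h1, h2, h3⟩
    refine ⟨x 0 - x 1, x 1, by linarith, h1, funext fun i => ?_⟩
    fin_cases i <;> simp [gE0, gD] <;> linarith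
  · rintro ⟨s, t, hs, ht, rfl⟩
    refine ⟨?_, ?_, ?_⟩ <;> simp [sL1, gE0, gD] <;> linarith

theorem hR0 : sR0 = {v | ∃ s : ℝ, 0 ≤ s ∧ v = 0 + s • gE0} := by
  ext x
  constructor
  · rintro ⟨h1, h2, h3⟩
    refine ⟨x 0, h1, funext fun i => ?_⟩
    fin_cases i <;> simp [gE0] <;> linarith
  · rintro ⟨s, hs, rfl⟩
    refine ⟨?_, ?_, ?_⟩ <;> simp [gE0] <;> linarith

theorem hRD : sRD = {v | ∃ s : ℝ, 0 ≤ s ∧ v = 0 + s • gD} := by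
  ext x
  constructor
  · rintro ⟨h1, h2, h3⟩
    refine ⟨x 1, h2, funext fun i => ?_⟩
    fin_cases i <;> simp [gD] <;> linarith
  · rintro ⟨s, hs, rfl⟩
    refine ⟨?_, ?_, ?_⟩ <;> simp [gD] <;> linarith

theorem hL2 : sL2 = {v | ∃ s t : ℝ, 0 ≤ s ∧ 0 ≤ t ∧ v = q2 + s • gE1 + t • gD} := by
  ext x
  constructor
  · rintro ⟨h1, h2, h3⟩
    refine ⟨x 1 - x 0, x 0, by linarith, h1, funext fun i => ?_⟩
    fin_cases i <;> simp [gE1, gD, q2] <;> linarith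
  · rintro ⟨s, t, hs, ht, rfl⟩
    refine ⟨?_, ?_, ?_⟩ <;> simp [gE1, gD, q2] <;> linarith

theorem hR1' : sR1' = {v | ∃ s : ℝ, 0 ≤ s ∧ v = q2 + s • gE1} := by
  ext x
  constructor
  · rintro ⟨h1, h2, h3⟩
    refine ⟨x 1, h2, funext fun i => ?_⟩
    fin_cases i <;> simp [gE1, q2] <;> linarith
  · rintro ⟨s, hs, rfl⟩
    refine ⟨?_, ?_, ?_⟩ <;> simp [gE1, q2] <;> linarith

theorem hRD' : sRD' = {v | ∃ s : ℝ, 0 ≤ s ∧ v = q2 + s • gD} := by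
  ext x
  constructor
  · rintro ⟨h1, h2, h3⟩
    refine ⟨x 1, h2, funext fun i => ?_⟩
    fin_cases i <;> simp [gD, q2] <;> linarith
  · rintro ⟨s, hs, rfl⟩
    refine ⟨?_, ?_, ?_⟩ <;> simp [gD, q2] <;> linarith

theorem hL2' : sL2' = {v | ∃ s t : ℝ, 0 ≤ s ∧ 0 ≤ t ∧ v = 0 + s • gE1 + t • gD} := by
  ext x
  constructor
  · rintro ⟨h1, h2, h3⟩
    refine ⟨x 1 - x 0, x 0, by linarith, h1, funext fun i => ?_⟩
    fin_cases i <;> simp [gE1, gD] <;> linarith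
  · rintro ⟨s, t, hs, ht, rfl⟩
    refine ⟨?_, ?_, ?_⟩ <;> simp [sL2', gE1, gD] <;> linarith

theorem hR1 : sR1 = {v | ∃ s : ℝ, 0 ≤ s ∧ v = 0 + s • gE1} := by
  ext x
  constructor
  · rintro ⟨h1, h2, h3⟩
    refine ⟨x 1, h2, funext fun i => ?_⟩
    fin_cases i <;> simp [gE1] <;> linarith
  · rintro ⟨s, hs, rfl⟩
    refine ⟨?_, ?_, ?_⟩ <;> simp [gE1] <;> linarith

theorem hZ : sZ = {(0 : Fin 3 → ℝ)} := rfl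

/-! ### Functional values -/

theorem pj_apply (i : Fin 3) (x : Fin 3 → ℝ) : pj i x = x i := rfl

/-! ### Face classifications -/

theorem faces_L1 {F : Set (Fin 3 → ℝ)} :
    IsFaceOf F sL1 ↔ F = sL1 ∨ F = sR0 ∨ F = sRD ∨ F = sZ := by
  rw [cone2_faces (q := 0) (g1 := gE0) (g2 := gD) (φ1 := pj 0 - pj 1) (φ2 := pj 1)
    (by simp [pj_apply, gE0]) (by simp [pj_apply, gD]) (by simp [pj_apply, gE0])
    (by simp [pj_apply, gD]) sL1 hL1, ← hR0, ← hRD, hZ]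

theorem faces_R0 {F : Set (Fin 3 → ℝ)} :
    IsFaceOf F sR0 ↔ F = sR0 ∨ F = sZ := by
  rw [ray_faces (q := 0) (g := gE0) (φ := pj 0) (by simp [pj_apply, gE0]) sR0 hR0, hZ]

theorem faces_RD {F : Set (Fin 3 → ℝ)} :
    IsFaceOf F sRD ↔ F = sRD ∨ F = sZ := by
  rw [ray_faces (q := 0) (g := gD) (φ := pj 0) (by simp [pj_apply, gD]) sRD hRD, hZ]

theorem faces_Z {F : Set (Fin 3 → ℝ)} : IsFaceOf F sZ ↔ F = sZ := by
  rw [hZ]; exact point_faces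

theorem faces_L2 {F : Set (Fin 3 → ℝ)} :
    IsFaceOf F sL2 ↔ F = sL2 ∨ F = sR1' ∨ F = sRD' ∨ F = sZ' := by
  rw [cone2_faces (q := q2) (g1 := gE1) (g2 := gD) (φ1 := pj 1 - pj 0) (φ2 := pj 0)
    (by simp [pj_apply, gE1]) (by simp [pj_apply, gD]) (by simp [pj_apply, gE1])
    (by simp [pj_apply, gD]) sL2 hL2, ← hR1', ← hRD']
  rfl

theorem faces_R1' {F : Set (Fin 3 → ℝ)} :
    IsFaceOf F sR1' ↔ F = sR1' ∨ F = sZ' := by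
  rw [ray_faces (q := q2) (g := gE1) (φ := pj 1) (by simp [pj_apply, gE1]) sR1' hR1']
  rfl

theorem faces_RD' {F : Set (Fin 3 → ℝ)} :
    IsFaceOf F sRD' ↔ F = sRD' ∨ F = sZ' := by
  rw [ray_faces (q := q2) (g := gD) (φ := pj 0) (by simp [pj_apply, gD]) sRD' hRD']
  rfl

theorem faces_Z' {F : Set (Fin 3 → ℝ)} : IsFaceOf F sZ' ↔ F = sZ' := point_faces

theorem faces_L2' {F : Set (Fin 3 → ℝ)} :
    IsFaceOf F sL2' ↔ F = sL2' ∨ F = sR1 ∨ F = sRD ∨ F = sZ := by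
  rw [cone2_faces (q := 0) (g1 := gE1) (g2 := gD) (φ1 := pj 1 - pj 0) (φ2 := pj 0)
    (by simp [pj_apply, gE1]) (by simp [pj_apply, gD]) (by simp [pj_apply, gE1])
    (by simp [pj_apply, gD]) sL2' hL2', ← hR1, ← hRD, hZ]

theorem faces_R1 {F : Set (Fin 3 → ℝ)} :
    IsFaceOf F sR1 ↔ F = sR1 ∨ F = sZ := by
  rw [ray_faces (q := 0) (g := gE1) (φ := pj 1) (by simp [pj_apply, gE1]) sR1 hR1, hZ]

/-! ### Membership and subset facts -/

theorem eq3 {x y : Fin 3 → ℝ} (h0 : x 0 = y 0) (h1 : x 1 = y 1) (h2 : x 2 = y 2) :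
    x = y := funext fun i => by fin_cases i <;> assumption

theorem zero_mem_L1 : (0 : Fin 3 → ℝ) ∈ sL1 := ⟨le_rfl, le_rfl, rfl⟩
theorem zero_mem_R0 : (0 : Fin 3 → ℝ) ∈ sR0 := ⟨le_rfl, rfl, rfl⟩
theorem zero_mem_RD : (0 : Fin 3 → ℝ) ∈ sRD := ⟨rfl, le_rfl, rfl⟩
theorem zero_mem_Z : (0 : Fin 3 → ℝ) ∈ sZ := rfl
theorem zero_mem_L2' : (0 : Fin 3 → ℝ) ∈ sL2' := ⟨le_rfl, le_rfl, rfl⟩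
theorem zero_mem_R1 : (0 : Fin 3 → ℝ) ∈ sR1 := ⟨rfl, le_rfl, rfl⟩
theorem q2_mem_L2 : q2 ∈ sL2 := by refine ⟨?_, ?_, ?_⟩ <;> simp [q2]
theorem q2_mem_R1' : q2 ∈ sR1' := by refine ⟨?_, ?_, ?_⟩ <;> simp [q2]
theorem q2_mem_RD' : q2 ∈ sRD' := by refine ⟨?_, ?_, ?_⟩ <;> simp [q2]
theorem q2_mem_Z' : q2 ∈ sZ' := rfl

theorem zmem {x : Fin 3 → ℝ} (h : x ∈ sZ) : x = 0 := h
theorem zmem' {x : Fin 3 → ℝ} (h : x ∈ sZ') : x = q2 := h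

theorem sub_R0_L1 : sR0 ⊆ sL1 := by rintro x ⟨h1, h2, h3⟩; exact ⟨le_of_eq h2.symm, by linarith, h3⟩
theorem sub_RD_L1 : sRD ⊆ sL1 := by rintro x ⟨h1, h2, h3⟩; exact ⟨h2, le_of_eq h1.symm, h3⟩
theorem sub_Z_L1 : sZ ⊆ sL1 := by rintro x h; rw [zmem h]; exact zero_mem_L1
theorem sub_Z_R0 : sZ ⊆ sR0 := by rintro x h; rw [zmem h]; exact zero_mem_R0
theorem sub_Z_RD : sZ ⊆ sRD := by rintro x h; rw [zmem h]; exact zero_mem_RD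
theorem sub_RD_L2' : sRD ⊆ sL2' := by rintro x ⟨h1, h2, h3⟩; exact ⟨by linarith, le_of_eq h1, h3⟩
theorem sub_R1_L2' : sR1 ⊆ sL2' := by rintro x ⟨h1, h2, h3⟩; exact ⟨le_of_eq h1.symm, by linarith, h3⟩
theorem sub_Z_L2' : sZ ⊆ sL2' := by rintro x h; rw [zmem h]; exact zero_mem_L2'
theorem sub_Z_R1 : sZ ⊆ sR1 := by rintro x h; rw [zmem h]; exact zero_mem_R1
theorem sub_R1'_L2 : sR1' ⊆ sL2 := by rintro x ⟨h1, h2, h3⟩; exact ⟨le_of_eq h1.symm, by linarith, h3⟩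
theorem sub_RD'_L2 : sRD' ⊆ sL2 := by rintro x ⟨h1, h2, h3⟩; exact ⟨by linarith, le_of_eq h1, h3⟩
theorem sub_Z'_L2 : sZ' ⊆ sL2 := by rintro x h; rw [zmem' h]; exact q2_mem_L2
theorem sub_Z'_R1' : sZ' ⊆ sR1' := by rintro x h; rw [zmem' h]; exact q2_mem_R1'
theorem sub_Z'_RD' : sZ' ⊆ sRD' := by rintro x h; rw [zmem' h]; exact q2_mem_RD'

theorem ht_L1 {x : Fin 3 → ℝ} (h : x ∈ sL1) : x 2 = 0 := h.2.2
theorem ht_R0 {x : Fin 3 → ℝ} (h : x ∈ sR0) : x 2 = 0 := h.2.2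
theorem ht_RD {x : Fin 3 → ℝ} (h : x ∈ sRD) : x 2 = 0 := h.2.2
theorem ht_Z {x : Fin 3 → ℝ} (h : x ∈ sZ) : x 2 = 0 := by rw [zmem h]; rfl
theorem ht_L2 {x : Fin 3 → ℝ} (h : x ∈ sL2) : x 2 = 1 := h.2.2
theorem ht_R1' {x : Fin 3 → ℝ} (h : x ∈ sR1') : x 2 = 1 := h.2.2
theorem ht_RD' {x : Fin 3 → ℝ} (h : x ∈ sRD') : x 2 = 1 := h.2.2
theorem ht_Z' {x : Fin 3 → ℝ} (h : x ∈ sZ') : x 2 = 1 := by rw [zmem' h]; simp [q2]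

/-! ### Intersection computations -/

theorem i_R0_RD : sR0 ∩ sRD = sZ := by
  ext x
  constructor
  · rintro ⟨⟨a1, a2, a3⟩, ⟨b1, b2, b3⟩⟩
    show x = 0
    apply eq3 <;> simp <;> linarith
  · intro h; exact ⟨sub_Z_R0 h, sub_Z_RD h⟩

theorem i_R1'_RD' : sR1' ∩ sRD' = sZ' := by
  ext x
  constructor
  · rintro ⟨⟨a1, a2, a3⟩, ⟨b1, b2, b3⟩⟩
    show x = q2
    apply eq3 <;> simp [q2] <;> linarith
  · intro h; exact ⟨sub_Z'_R1' h, sub_Z'_RD' h⟩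

theorem i_L1_L2' : sL1 ∩ sL2' = sRD := by
  ext x
  constructor
  · rintro ⟨⟨a1, a2, a3⟩, ⟨b1, b2, b3⟩⟩
    exact ⟨by linarith, a1, a3⟩
  · intro h; exact ⟨sub_RD_L1 h, sub_RD_L2' h⟩

theorem i_R0_R1 : sR0 ∩ sR1 = sZ := by
  ext x
  constructor
  · rintro ⟨⟨a1, a2, a3⟩, ⟨b1, b2, b3⟩⟩
    show x = 0
    apply eq3 <;> simp <;> linarith
  · intro h; exact ⟨sub_Z_R0 h, sub_Z_R1 h⟩

theorem i_R0_L2' : sR0 ∩ sL2' = sZ := by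
  ext x
  constructor
  · rintro ⟨⟨a1, a2, a3⟩, ⟨b1, b2, b3⟩⟩
    show x = 0
    apply eq3 <;> simp <;> linarith
  · intro h; exact ⟨sub_Z_R0 h, sub_Z_L2' h⟩

theorem i_R1_L1 : sR1 ∩ sL1 = sZ := by
  ext x
  constructor
  · rintro ⟨⟨a1, a2, a3⟩, ⟨b1, b2, b3⟩⟩
    show x = 0
    apply eq3 <;> simp <;> linarith
  · intro h; exact ⟨sub_Z_R1 h, sub_Z_L1 h⟩

theorem i_R1_RD : sR1 ∩ sRD = sZ := by
  ext x
  constructor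
  · rintro ⟨⟨a1, a2, a3⟩, ⟨b1, b2, b3⟩⟩
    show x = 0
    apply eq3 <;> simp <;> linarith
  · intro h; exact ⟨sub_Z_R1 h, sub_Z_RD h⟩

/-! ### Recession cones -/

theorem recPoly_L1 : recPoly sL1 = sL1 := by
  ext u
  constructor
  · intro h; simpa using h 0 zero_mem_L1
  · rintro ⟨h1, h2, h3⟩ x ⟨g1, g2, g3⟩
    refine ⟨?_, ?_, ?_⟩ <;> simp [Pi.add_apply] <;> linarith

theorem recPoly_R0 : recPoly sR0 = sR0 := by
  ext u
  constructor
  · intro h; simpa using h 0 zero_mem_R0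
  · rintro ⟨h1, h2, h3⟩ x ⟨g1, g2, g3⟩
    refine ⟨?_, ?_, ?_⟩ <;> simp [Pi.add_apply] <;> linarith

theorem recPoly_RD : recPoly sRD = sRD := by
  ext u
  constructor
  · intro h; simpa using h 0 zero_mem_RD
  · rintro ⟨h1, h2, h3⟩ x ⟨g1, g2, g3⟩
    refine ⟨?_, ?_, ?_⟩ <;> simp [Pi.add_apply] <;> linarith

theorem recPoly_Z : recPoly sZ = sZ := by
  ext u
  constructor
  · intro h
    have := h 0 zero_mem_Z
    simpa using this
  · intro h x hx
    rw [zmem h, zmem hx]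
    simp [sZ]

theorem recPoly_L2 : recPoly sL2 = sL2' := by
  ext u
  constructor
  · intro h
    obtain ⟨h1, h2, h3⟩ := h q2 q2_mem_L2
    simp [q2, Pi.add_apply] at h1 h2 h3
    exact ⟨h1, h2, h3⟩
  · rintro ⟨h1, h2, h3⟩ x ⟨g1, g2, g3⟩
    refine ⟨?_, ?_, ?_⟩ <;> simp [Pi.add_apply] <;> linarith

theorem recPoly_R1' : recPoly sR1' = sR1 := by
  ext u
  constructor
  · intro h
    obtain ⟨h1, h2, h3⟩ := h q2 q2_mem_R1'
    simp [q2, Pi.add_apply] at h1 h2 h3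
    exact ⟨h1, h2, h3⟩
  · rintro ⟨h1, h2, h3⟩ x ⟨g1, g2, g3⟩
    refine ⟨?_, ?_, ?_⟩ <;> simp [Pi.add_apply] <;> linarith

theorem recPoly_RD' : recPoly sRD' = sRD := by
  ext u
  constructor
  · intro h
    obtain ⟨h1, h2, h3⟩ := h q2 q2_mem_RD'
    simp [q2, Pi.add_apply] at h1 h2 h3
    exact ⟨h1, h2, h3⟩
  · rintro ⟨h1, h2, h3⟩ x ⟨g1, g2, g3⟩
    refine ⟨?_, ?_, ?_⟩ <;> simp [Pi.add_apply] <;> linarith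

theorem recPoly_Z' : recPoly sZ' = sZ := by
  ext u
  constructor
  · intro h
    have := h q2 q2_mem_Z'
    have h2 : q2 + u = q2 := this
    have : u = 0 := by
      have := congrArg (fun y => y - q2) h2
      simpa using this
    exact this
  · intro h x hx
    rw [zmem h, zmem' hx]
    simp [sZ']

/-! ### Polyhedron proofs -/

theorem isPoly6 (l1 l2 l3 l4 l5 l6 : (Fin 3 → ℝ) →ₗ[ℝ] ℝ) (b1 b2 b3 b4 b5 b6 : ℝ)
    (S : Set (Fin 3 → ℝ))
    (h : S = {x | l1 x ≤ b1 ∧ l2 x ≤ b2 ∧ l3 x ≤ b3 ∧ l4 x ≤ b4 ∧ l5 x ≤ b5 ∧ l6 x ≤ b6}) :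
    IsPolyhedron S := by
  refine ⟨6, ![l1, l2, l3, l4, l5, l6], ![b1, b2, b3, b4, b5, b6], ?_⟩
  rw [h]
  ext x
  simp [Fin.forall_fin_succ, and_assoc]

theorem poly_L1 : IsPolyhedron sL1 := by
  refine isPoly6 (-(pj 1)) (pj 1 - pj 0) (pj 2) (-(pj 2)) 0 0 0 0 0 0 0 0 sL1 ?_
  ext x
  simp only [sL1, Set.mem_setOf_eq, LinearMap.sub_apply, LinearMap.neg_apply,
    LinearMap.zero_apply, pj_apply]
  constructor
  · rintro ⟨h1, h2, h3⟩
    refine ⟨by linarith, by linarith, by linarith, by linarith, le_rfl, le_rfl⟩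
  · rintro ⟨h1, h2, h3, h4, -, -⟩
    exact ⟨by linarith, by linarith, by linarith⟩

theorem poly_R0 : IsPolyhedron sR0 := by
  refine isPoly6 (-(pj 0)) (pj 1) (-(pj 1)) (pj 2) (-(pj 2)) 0 0 0 0 0 0 0 sR0 ?_
  ext x
  simp only [sR0, Set.mem_setOf_eq, LinearMap.sub_apply, LinearMap.neg_apply,
    LinearMap.zero_apply, pj_apply]
  constructor
  · rintro ⟨h1, h2, h3⟩
    refine ⟨by linarith, by linarith, by linarith, by linarith, by linarith, le_rfl⟩
  · rintro ⟨h1, h2, h3, h4, h5, -⟩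
    exact ⟨by linarith, by linarith, by linarith⟩

theorem poly_RD : IsPolyhedron sRD := by
  refine isPoly6 (pj 0 - pj 1) (pj 1 - pj 0) (-(pj 1)) (pj 2) (-(pj 2)) 0 0 0 0 0 0 0 sRD ?_
  ext x
  simp only [sRD, Set.mem_setOf_eq, LinearMap.sub_apply, LinearMap.neg_apply,
    LinearMap.zero_apply, pj_apply]
  constructor
  · rintro ⟨h1, h2, h3⟩
    refine ⟨by linarith, by linarith, by linarith, by linarith, by linarith, le_rfl⟩
  · rintro ⟨h1, h2, h3, h4, h5, -⟩
    exact ⟨by linarith, by linarith, by linarith⟩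

theorem poly_Z : IsPolyhedron sZ := by
  refine isPoly6 (pj 0) (-(pj 0)) (pj 1) (-(pj 1)) (pj 2) (-(pj 2)) 0 0 0 0 0 0 sZ ?_
  ext x
  simp only [Set.mem_setOf_eq, LinearMap.sub_apply, LinearMap.neg_apply,
    LinearMap.zero_apply, pj_apply]
  constructor
  · intro h
    rw [zmem h]
    norm_num
  · rintro ⟨h1, h2, h3, h4, h5, h6⟩
    show x = 0
    apply eq3 <;> simp <;> linarith

theorem poly_L2 : IsPolyhedron sL2 := by
  refine isPoly6 (-(pj 0)) (pj 0 - pj 1) (pj 2) (-(pj 2)) 0 0 0 0 1 (-1) 0 0 sL2 ?_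
  ext x
  simp only [sL2, Set.mem_setOf_eq, LinearMap.sub_apply, LinearMap.neg_apply,
    LinearMap.zero_apply, pj_apply]
  constructor
  · rintro ⟨h1, h2, h3⟩
    refine ⟨by linarith, by linarith, by linarith, by linarith, le_rfl, le_rfl⟩
  · rintro ⟨h1, h2, h3, h4, -, -⟩
    exact ⟨by linarith, by linarith, by linarith⟩

theorem poly_R1' : IsPolyhedron sR1' := by
  refine isPoly6 (pj 0) (-(pj 0)) (-(pj 1)) (pj 2) (-(pj 2)) 0 0 0 0 1 (-1) 0 sR1' ?_
  ext x
  simp only [sR1', Set.mem_setOf_eq, LinearMap.sub_apply, LinearMap.neg_apply,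
    LinearMap.zero_apply, pj_apply]
  constructor
  · rintro ⟨h1, h2, h3⟩
    refine ⟨by linarith, by linarith, by linarith, by linarith, by linarith, le_rfl⟩
  · rintro ⟨h1, h2, h3, h4, h5, -⟩
    exact ⟨by linarith, by linarith, by linarith⟩

theorem poly_RD' : IsPolyhedron sRD' := by
  refine isPoly6 (pj 0 - pj 1) (pj 1 - pj 0) (-(pj 1)) (pj 2) (-(pj 2)) 0 0 0 0 1 (-1) 0 sRD' ?_
  ext x
  simp only [sRD', Set.mem_setOf_eq, LinearMap.sub_apply, LinearMap.neg_apply,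
    LinearMap.zero_apply, pj_apply]
  constructor
  · rintro ⟨h1, h2, h3⟩
    refine ⟨by linarith, by linarith, by linarith, by linarith, by linarith, le_rfl⟩
  · rintro ⟨h1, h2, h3, h4, h5, -⟩
    exact ⟨by linarith, by linarith, by linarith⟩

theorem poly_Z' : IsPolyhedron sZ' := by
  refine isPoly6 (pj 0) (-(pj 0)) (pj 1) (-(pj 1)) (pj 2) (-(pj 2)) 0 0 0 0 1 (-1) sZ' ?_
  ext x
  simp only [Set.mem_setOf_eq, LinearMap.sub_apply, LinearMap.neg_apply,
    LinearMap.zero_apply, pj_apply]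
  constructor
  · intro h
    rw [zmem' h]
    simp [q2]
  · rintro ⟨h1, h2, h3, h4, h5, h6⟩
    show x = q2
    apply eq3 <;> simp [q2] <;> linarith

theorem poly_L2' : IsPolyhedron sL2' := by
  refine isPoly6 (-(pj 0)) (pj 0 - pj 1) (pj 2) (-(pj 2)) 0 0 0 0 0 0 0 0 sL2' ?_
  ext x
  simp only [sL2', Set.mem_setOf_eq, LinearMap.sub_apply, LinearMap.neg_apply,
    LinearMap.zero_apply, pj_apply]
  constructor
  · rintro ⟨h1, h2, h3⟩
    refine ⟨by linarith, by linarith, by linarith, by linarith, le_rfl, le_rfl⟩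
  · rintro ⟨h1, h2, h3, h4, -, -⟩
    exact ⟨by linarith, by linarith, by linarith⟩

theorem poly_R1 : IsPolyhedron sR1 := by
  refine isPoly6 (pj 0) (-(pj 0)) (-(pj 1)) (pj 2) (-(pj 2)) 0 0 0 0 0 0 0 sR1 ?_
  ext x
  simp only [sR1, Set.mem_setOf_eq, LinearMap.sub_apply, LinearMap.neg_apply,
    LinearMap.zero_apply, pj_apply]
  constructor
  · rintro ⟨h1, h2, h3⟩
    refine ⟨by linarith, by linarith, by linarith, by linarith, by linarith, le_rfl⟩
  · rintro ⟨h1, h2, h3, h4, h5, -⟩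
    exact ⟨by linarith, by linarith, by linarith⟩

/-! ### Polyhedral cone proofs -/

theorem isPolyhedralCone_pair {g1 g2 : Fin 3 → ℝ} (hne : g1 ≠ g2) (S : Set (Fin 3 → ℝ))
    (h : S = {v | ∃ s t : ℝ, 0 ≤ s ∧ 0 ≤ t ∧ v = 0 + s • g1 + t • g2}) :
    IsPolyhedralCone S := by
  classical
  refine ⟨{g1, g2}, ?_⟩
  rw [h]
  ext x
  simp only [Set.mem_setOf_eq]
  constructor
  · rintro ⟨s, t, hs, ht, rfl⟩
    refine ⟨fun v => if v = g1 then s else if v = g2 then t else 0, ?_, ?_⟩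
    · intro v
      dsimp only
      split_ifs <;> first | exact hs | exact ht | exact le_rfl
    · rw [Finset.sum_insert (by simpa using hne), Finset.sum_singleton]
      simp [hne, (Ne.symm hne)]
  · rintro ⟨c, hc, rfl⟩
    refine ⟨c g1, c g2, hc g1, hc g2, ?_⟩
    rw [Finset.sum_insert (by simpa using hne), Finset.sum_singleton, zero_add]

theorem isPolyhedralCone_ray (g : Fin 3 → ℝ) (S : Set (Fin 3 → ℝ))
    (h : S = {v | ∃ s : ℝ, 0 ≤ s ∧ v = 0 + s • g}) :
    IsPolyhedralCone S := by
  classical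
  refine ⟨{g}, ?_⟩
  rw [h]
  ext x
  simp only [Set.mem_setOf_eq, Finset.sum_singleton]
  constructor
  · rintro ⟨s, hs, rfl⟩
    exact ⟨fun v => if v = g then s else 0,
      fun v => by dsimp only; split_ifs <;> simp [hs],
      by simp [zero_add]⟩
  · rintro ⟨c, hc, rfl⟩
    exact ⟨c g, hc g, by simp [zero_add]⟩

theorem cone_Z : IsPolyhedralCone sZ := by
  refine ⟨∅, ?_⟩
  ext x
  simp only [Finset.sum_empty, Set.mem_setOf_eq]
  constructor
  · intro h
    exact ⟨fun _ => 0, fun _ => le_rfl, zmem h⟩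
  · rintro ⟨c, -, rfl⟩
    rfl

theorem gE0_ne_gD : gE0 ≠ gD := by
  intro h
  have := congrFun h 1
  simp [gE0, gD] at this

theorem gE1_ne_gD : gE1 ≠ gD := by
  intro h
  have := congrFun h 0
  simp [gE1, gD] at this

theorem cone_L1 : IsPolyhedralCone sL1 := isPolyhedralCone_pair gE0_ne_gD sL1 hL1
theorem cone_L2' : IsPolyhedralCone sL2' := isPolyhedralCone_pair gE1_ne_gD sL2' hL2'
theorem cone_R0 : IsPolyhedralCone sR0 := isPolyhedralCone_ray gE0 sR0 hR0
theorem cone_R1 : IsPolyhedralCone sR1 := isPolyhedralCone_ray gE1 sR1 hR1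
theorem cone_RD : IsPolyhedralCone sRD := isPolyhedralCone_ray gD sRD hRD

/-! ### Strong convexity -/

theorem sc_W : StronglyConvexSet {x : Fin 3 → ℝ | 0 ≤ x 0 ∧ 0 ≤ x 1 ∧ x 2 = 0} := by
  rintro ⟨p, d, hd, h⟩
  apply hd
  have key : ∀ i : Fin 3, (∀ t : ℝ, 0 ≤ p i + t * d i) → d i = 0 := by
    intro i hi
    by_contra hdi
    rcases lt_or_gt_of_ne hdi with hneg | hpos
    · have := hi ((-(p i) - 1) / d i)
      rw [div_mul_cancel₀ _ (ne_of_lt hneg)] at this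
      linarith
    · have := hi ((-(p i) - 1) / d i)
      rw [div_mul_cancel₀ _ (ne_of_gt hpos)] at this
      linarith
  have hcomp : ∀ (t : ℝ) (i : Fin 3), (p + t • d) i = p i + t * d i := by
    intro t i; simp
  funext i
  fin_cases i
  · exact key 0 fun t => by have := (h t).1; rwa [hcomp] at this
  · exact key 1 fun t => by have := (h t).2.1; rwa [hcomp] at this
  · show d 2 = 0
    have h0 := (h 0).2.2
    have h1 := (h 1).2.2
    rw [hcomp] at h0 h1
    linarith

theorem sc_subset {S T : Set (Fin 3 → ℝ)} (hTS : T ⊆ S) (hS : StronglyConvexSet S) :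
    StronglyConvexSet T := fun ⟨p, d, hd, h⟩ => hS ⟨p, d, hd, fun t => hTS (h t)⟩

theorem sub_L1_W : sL1 ⊆ {x : Fin 3 → ℝ | 0 ≤ x 0 ∧ 0 ≤ x 1 ∧ x 2 = 0} := by
  rintro x ⟨h1, h2, h3⟩; exact ⟨by linarith, h1, h3⟩

theorem sub_L2'_W : sL2' ⊆ {x : Fin 3 → ℝ | 0 ≤ x 0 ∧ 0 ≤ x 1 ∧ x 2 = 0} := by
  rintro x ⟨h1, h2, h3⟩; exact ⟨h1, by linarith, h3⟩

theorem sc_L1 : StronglyConvexSet sL1 := sc_subset sub_L1_W sc_W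
theorem sc_L2' : StronglyConvexSet sL2' := sc_subset sub_L2'_W sc_W
theorem sc_R0 : StronglyConvexSet sR0 := sc_subset (Set.Subset.trans sub_R0_L1 sub_L1_W) sc_W
theorem sc_R1 : StronglyConvexSet sR1 := sc_subset (Set.Subset.trans sub_R1_L2' sub_L2'_W) sc_W
theorem sc_RD : StronglyConvexSet sRD := sc_subset (Set.Subset.trans sub_RD_L1 sub_L1_W) sc_W
theorem sc_Z : StronglyConvexSet sZ := sc_subset (Set.Subset.trans sub_Z_L1 sub_L1_W) sc_W

/-! ### Face facts -/

theorem f_L1_L1 : IsFaceOf sL1 sL1 := faces_L1.mpr (Or.inl rfl)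
theorem f_R0_L1 : IsFaceOf sR0 sL1 := faces_L1.mpr (Or.inr (Or.inl rfl))
theorem f_RD_L1 : IsFaceOf sRD sL1 := faces_L1.mpr (Or.inr (Or.inr (Or.inl rfl)))
theorem f_Z_L1 : IsFaceOf sZ sL1 := faces_L1.mpr (Or.inr (Or.inr (Or.inr rfl)))
theorem f_L2_L2 : IsFaceOf sL2 sL2 := faces_L2.mpr (Or.inl rfl)
theorem f_R1'_L2 : IsFaceOf sR1' sL2 := faces_L2.mpr (Or.inr (Or.inl rfl))
theorem f_RD'_L2 : IsFaceOf sRD' sL2 := faces_L2.mpr (Or.inr (Or.inr (Or.inl rfl)))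
theorem f_Z'_L2 : IsFaceOf sZ' sL2 := faces_L2.mpr (Or.inr (Or.inr (Or.inr rfl)))
theorem f_L2'_L2' : IsFaceOf sL2' sL2' := faces_L2'.mpr (Or.inl rfl)
theorem f_R1_L2' : IsFaceOf sR1 sL2' := faces_L2'.mpr (Or.inr (Or.inl rfl))
theorem f_RD_L2' : IsFaceOf sRD sL2' := faces_L2'.mpr (Or.inr (Or.inr (Or.inl rfl)))
theorem f_Z_L2' : IsFaceOf sZ sL2' := faces_L2'.mpr (Or.inr (Or.inr (Or.inr rfl)))
theorem f_R0_R0 : IsFaceOf sR0 sR0 := faces_R0.mpr (Or.inl rfl)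
theorem f_Z_R0 : IsFaceOf sZ sR0 := faces_R0.mpr (Or.inr rfl)
theorem f_RD_RD : IsFaceOf sRD sRD := faces_RD.mpr (Or.inl rfl)
theorem f_Z_RD : IsFaceOf sZ sRD := faces_RD.mpr (Or.inr rfl)
theorem f_R1'_R1' : IsFaceOf sR1' sR1' := faces_R1'.mpr (Or.inl rfl)
theorem f_Z'_R1' : IsFaceOf sZ' sR1' := faces_R1'.mpr (Or.inr rfl)
theorem f_RD'_RD' : IsFaceOf sRD' sRD' := faces_RD'.mpr (Or.inl rfl)
theorem f_Z'_RD' : IsFaceOf sZ' sRD' := faces_RD'.mpr (Or.inr rfl)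
theorem f_R1_R1 : IsFaceOf sR1 sR1 := faces_R1.mpr (Or.inl rfl)
theorem f_Z_R1 : IsFaceOf sZ sR1 := faces_R1.mpr (Or.inr rfl)
theorem f_Z_Z : IsFaceOf sZ sZ := faces_Z.mpr rfl
theorem f_Z'_Z' : IsFaceOf sZ' sZ' := faces_Z'.mpr rfl

/-! ### Intersection face conditions -/

theorem interP : ∀ S T : Set (Fin 3 → ℝ),
    (S = sL1 ∨ S = sR0 ∨ S = sRD ∨ S = sZ ∨ S = sL2 ∨ S = sR1' ∨ S = sRD' ∨ S = sZ') →
    (T = sL1 ∨ T = sR0 ∨ T = sRD ∨ T = sZ ∨ T = sL2 ∨ T = sR1' ∨ T = sRD' ∨ T = sZ') →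
    (S ∩ T).Nonempty → IsFaceOf (S ∩ T) S ∧ IsFaceOf (S ∩ T) T := by
  intro S T hS hT hne
  rcases hS with rfl | rfl | rfl | rfl | rfl | rfl | rfl | rfl <;>
    rcases hT with rfl | rfl | rfl | rfl | rfl | rfl | rfl | rfl
  · rw [Set.inter_self]; exact ⟨f_L1_L1, f_L1_L1⟩
  · rw [Set.inter_eq_right.mpr sub_R0_L1]; exact ⟨f_R0_L1, f_R0_R0⟩
  · rw [Set.inter_eq_right.mpr sub_RD_L1]; exact ⟨f_RD_L1, f_RD_RD⟩
  · rw [Set.inter_eq_right.mpr sub_Z_L1]; exact ⟨f_Z_L1, f_Z_Z⟩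
  · exact absurd (((ht_L1 hne.choose_spec.1).symm).trans (ht_L2 hne.choose_spec.2)) (by norm_num)
  · exact absurd (((ht_L1 hne.choose_spec.1).symm).trans (ht_R1' hne.choose_spec.2)) (by norm_num)
  · exact absurd (((ht_L1 hne.choose_spec.1).symm).trans (ht_RD' hne.choose_spec.2)) (by norm_num)
  · exact absurd (((ht_L1 hne.choose_spec.1).symm).trans (ht_Z' hne.choose_spec.2)) (by norm_num)
  · rw [Set.inter_eq_left.mpr sub_R0_L1]; exact ⟨f_R0_R0, f_R0_L1⟩
  · rw [Set.inter_self]; exact ⟨f_R0_R0, f_R0_R0⟩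
  · rw [i_R0_RD]; exact ⟨f_Z_R0, f_Z_RD⟩
  · rw [Set.inter_eq_right.mpr sub_Z_R0]; exact ⟨f_Z_R0, f_Z_Z⟩
  · exact absurd (((ht_R0 hne.choose_spec.1).symm).trans (ht_L2 hne.choose_spec.2)) (by norm_num)
  · exact absurd (((ht_R0 hne.choose_spec.1).symm).trans (ht_R1' hne.choose_spec.2)) (by norm_num)
  · exact absurd (((ht_R0 hne.choose_spec.1).symm).trans (ht_RD' hne.choose_spec.2)) (by norm_num)
  · exact absurd (((ht_R0 hne.choose_spec.1).symm).trans (ht_Z' hne.choose_spec.2)) (by norm_num)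
  · rw [Set.inter_eq_left.mpr sub_RD_L1]; exact ⟨f_RD_RD, f_RD_L1⟩
  · rw [Set.inter_comm, i_R0_RD]; exact ⟨f_Z_RD, f_Z_R0⟩
  · rw [Set.inter_self]; exact ⟨f_RD_RD, f_RD_RD⟩
  · rw [Set.inter_eq_right.mpr sub_Z_RD]; exact ⟨f_Z_RD, f_Z_Z⟩
  · exact absurd (((ht_RD hne.choose_spec.1).symm).trans (ht_L2 hne.choose_spec.2)) (by norm_num)
  · exact absurd (((ht_RD hne.choose_spec.1).symm).trans (ht_R1' hne.choose_spec.2)) (by norm_num)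
  · exact absurd (((ht_RD hne.choose_spec.1).symm).trans (ht_RD' hne.choose_spec.2)) (by norm_num)
  · exact absurd (((ht_RD hne.choose_spec.1).symm).trans (ht_Z' hne.choose_spec.2)) (by norm_num)
  · rw [Set.inter_eq_left.mpr sub_Z_L1]; exact ⟨f_Z_Z, f_Z_L1⟩
  · rw [Set.inter_eq_left.mpr sub_Z_R0]; exact ⟨f_Z_Z, f_Z_R0⟩
  · rw [Set.inter_eq_left.mpr sub_Z_RD]; exact ⟨f_Z_Z, f_Z_RD⟩
  · rw [Set.inter_self]; exact ⟨f_Z_Z, f_Z_Z⟩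
  · exact absurd (((ht_Z hne.choose_spec.1).symm).trans (ht_L2 hne.choose_spec.2)) (by norm_num)
  · exact absurd (((ht_Z hne.choose_spec.1).symm).trans (ht_R1' hne.choose_spec.2)) (by norm_num)
  · exact absurd (((ht_Z hne.choose_spec.1).symm).trans (ht_RD' hne.choose_spec.2)) (by norm_num)
  · exact absurd (((ht_Z hne.choose_spec.1).symm).trans (ht_Z' hne.choose_spec.2)) (by norm_num)
  · exact absurd (((ht_L1 hne.choose_spec.2).symm).trans (ht_L2 hne.choose_spec.1)) (by norm_num)
  · exact absurd (((ht_R0 hne.choose_spec.2).symm).trans (ht_L2 hne.choose_spec.1)) (by norm_num)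
  · exact absurd (((ht_RD hne.choose_spec.2).symm).trans (ht_L2 hne.choose_spec.1)) (by norm_num)
  · exact absurd (((ht_Z hne.choose_spec.2).symm).trans (ht_L2 hne.choose_spec.1)) (by norm_num)
  · rw [Set.inter_self]; exact ⟨f_L2_L2, f_L2_L2⟩
  · rw [Set.inter_eq_right.mpr sub_R1'_L2]; exact ⟨f_R1'_L2, f_R1'_R1'⟩
  · rw [Set.inter_eq_right.mpr sub_RD'_L2]; exact ⟨f_RD'_L2, f_RD'_RD'⟩
  · rw [Set.inter_eq_right.mpr sub_Z'_L2]; exact ⟨f_Z'_L2, f_Z'_Z'⟩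
  · exact absurd (((ht_L1 hne.choose_spec.2).symm).trans (ht_R1' hne.choose_spec.1)) (by norm_num)
  · exact absurd (((ht_R0 hne.choose_spec.2).symm).trans (ht_R1' hne.choose_spec.1)) (by norm_num)
  · exact absurd (((ht_RD hne.choose_spec.2).symm).trans (ht_R1' hne.choose_spec.1)) (by norm_num)
  · exact absurd (((ht_Z hne.choose_spec.2).symm).trans (ht_R1' hne.choose_spec.1)) (by norm_num)
  · rw [Set.inter_eq_left.mpr sub_R1'_L2]; exact ⟨f_R1'_R1', f_R1'_L2⟩
  · rw [Set.inter_self]; exact ⟨f_R1'_R1', f_R1'_R1'⟩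
  · rw [i_R1'_RD']; exact ⟨f_Z'_R1', f_Z'_RD'⟩
  · rw [Set.inter_eq_right.mpr sub_Z'_R1']; exact ⟨f_Z'_R1', f_Z'_Z'⟩
  · exact absurd (((ht_L1 hne.choose_spec.2).symm).trans (ht_RD' hne.choose_spec.1)) (by norm_num)
  · exact absurd (((ht_R0 hne.choose_spec.2).symm).trans (ht_RD' hne.choose_spec.1)) (by norm_num)
  · exact absurd (((ht_RD hne.choose_spec.2).symm).trans (ht_RD' hne.choose_spec.1)) (by norm_num)
  · exact absurd (((ht_Z hne.choose_spec.2).symm).trans (ht_RD' hne.choose_spec.1)) (by norm_num)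
  · rw [Set.inter_eq_left.mpr sub_RD'_L2]; exact ⟨f_RD'_RD', f_RD'_L2⟩
  · rw [Set.inter_comm, i_R1'_RD']; exact ⟨f_Z'_RD', f_Z'_R1'⟩
  · rw [Set.inter_self]; exact ⟨f_RD'_RD', f_RD'_RD'⟩
  · rw [Set.inter_eq_right.mpr sub_Z'_RD']; exact ⟨f_Z'_RD', f_Z'_Z'⟩
  · exact absurd (((ht_L1 hne.choose_spec.2).symm).trans (ht_Z' hne.choose_spec.1)) (by norm_num)
  · exact absurd (((ht_R0 hne.choose_spec.2).symm).trans (ht_Z' hne.choose_spec.1)) (by norm_num)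
  · exact absurd (((ht_RD hne.choose_spec.2).symm).trans (ht_Z' hne.choose_spec.1)) (by norm_num)
  · exact absurd (((ht_Z hne.choose_spec.2).symm).trans (ht_Z' hne.choose_spec.1)) (by norm_num)
  · rw [Set.inter_eq_left.mpr sub_Z'_L2]; exact ⟨f_Z'_Z', f_Z'_L2⟩
  · rw [Set.inter_eq_left.mpr sub_Z'_R1']; exact ⟨f_Z'_Z', f_Z'_R1'⟩
  · rw [Set.inter_eq_left.mpr sub_Z'_RD']; exact ⟨f_Z'_Z', f_Z'_RD'⟩
  · rw [Set.inter_self]; exact ⟨f_Z'_Z', f_Z'_Z'⟩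

theorem interR : ∀ S T : Set (Fin 3 → ℝ),
    (S = sL1 ∨ S = sL2' ∨ S = sR0 ∨ S = sR1 ∨ S = sRD ∨ S = sZ) →
    (T = sL1 ∨ T = sL2' ∨ T = sR0 ∨ T = sR1 ∨ T = sRD ∨ T = sZ) →
    IsFaceOf (S ∩ T) S ∧ IsFaceOf (S ∩ T) T := by
  intro S T hS hT
  rcases hS with rfl | rfl | rfl | rfl | rfl | rfl <;>
    rcases hT with rfl | rfl | rfl | rfl | rfl | rfl
  · rw [Set.inter_self]; exact ⟨f_L1_L1, f_L1_L1⟩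
  · rw [i_L1_L2']; exact ⟨f_RD_L1, f_RD_L2'⟩
  · rw [Set.inter_eq_right.mpr sub_R0_L1]; exact ⟨f_R0_L1, f_R0_R0⟩
  · rw [Set.inter_comm, i_R1_L1]; exact ⟨f_Z_L1, f_Z_R1⟩
  · rw [Set.inter_eq_right.mpr sub_RD_L1]; exact ⟨f_RD_L1, f_RD_RD⟩
  · rw [Set.inter_eq_right.mpr sub_Z_L1]; exact ⟨f_Z_L1, f_Z_Z⟩
  · rw [Set.inter_comm, i_L1_L2']; exact ⟨f_RD_L2', f_RD_L1⟩
  · rw [Set.inter_self]; exact ⟨f_L2'_L2', f_L2'_L2'⟩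
  · rw [Set.inter_comm, i_R0_L2']; exact ⟨f_Z_L2', f_Z_R0⟩
  · rw [Set.inter_eq_right.mpr sub_R1_L2']; exact ⟨f_R1_L2', f_R1_R1⟩
  · rw [Set.inter_eq_right.mpr sub_RD_L2']; exact ⟨f_RD_L2', f_RD_RD⟩
  · rw [Set.inter_eq_right.mpr sub_Z_L2']; exact ⟨f_Z_L2', f_Z_Z⟩
  · rw [Set.inter_eq_left.mpr sub_R0_L1]; exact ⟨f_R0_R0, f_R0_L1⟩
  · rw [i_R0_L2']; exact ⟨f_Z_R0, f_Z_L2'⟩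
  · rw [Set.inter_self]; exact ⟨f_R0_R0, f_R0_R0⟩
  · rw [i_R0_R1]; exact ⟨f_Z_R0, f_Z_R1⟩
  · rw [i_R0_RD]; exact ⟨f_Z_R0, f_Z_RD⟩
  · rw [Set.inter_eq_right.mpr sub_Z_R0]; exact ⟨f_Z_R0, f_Z_Z⟩
  · rw [i_R1_L1]; exact ⟨f_Z_R1, f_Z_L1⟩
  · rw [Set.inter_eq_left.mpr sub_R1_L2']; exact ⟨f_R1_R1, f_R1_L2'⟩
  · rw [Set.inter_comm, i_R0_R1]; exact ⟨f_Z_R1, f_Z_R0⟩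
  · rw [Set.inter_self]; exact ⟨f_R1_R1, f_R1_R1⟩
  · rw [i_R1_RD]; exact ⟨f_Z_R1, f_Z_RD⟩
  · rw [Set.inter_eq_right.mpr sub_Z_R1]; exact ⟨f_Z_R1, f_Z_Z⟩
  · rw [Set.inter_eq_left.mpr sub_RD_L1]; exact ⟨f_RD_RD, f_RD_L1⟩
  · rw [Set.inter_eq_left.mpr sub_RD_L2']; exact ⟨f_RD_RD, f_RD_L2'⟩
  · rw [Set.inter_comm, i_R0_RD]; exact ⟨f_Z_RD, f_Z_R0⟩
  · rw [Set.inter_comm, i_R1_RD]; exact ⟨f_Z_RD, f_Z_R1⟩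
  · rw [Set.inter_self]; exact ⟨f_RD_RD, f_RD_RD⟩
  · rw [Set.inter_eq_right.mpr sub_Z_RD]; exact ⟨f_Z_RD, f_Z_Z⟩
  · rw [Set.inter_eq_left.mpr sub_Z_L1]; exact ⟨f_Z_Z, f_Z_L1⟩
  · rw [Set.inter_eq_left.mpr sub_Z_L2']; exact ⟨f_Z_Z, f_Z_L2'⟩
  · rw [Set.inter_eq_left.mpr sub_Z_R0]; exact ⟨f_Z_Z, f_Z_R0⟩
  · rw [Set.inter_eq_left.mpr sub_Z_R1]; exact ⟨f_Z_Z, f_Z_R1⟩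
  · rw [Set.inter_eq_left.mpr sub_Z_RD]; exact ⟨f_Z_Z, f_Z_RD⟩
  · rw [Set.inter_self]; exact ⟨f_Z_Z, f_Z_Z⟩

/-! ### The complex -/

def Pset : Set (Set (Fin 3 → ℝ)) := {S | IsFaceOf S sL1 ∨ IsFaceOf S sL2}

theorem memP {S : Set (Fin 3 → ℝ)} : S ∈ Pset ↔
    (S = sL1 ∨ S = sR0 ∨ S = sRD ∨ S = sZ ∨ S = sL2 ∨ S = sR1' ∨ S = sRD' ∨ S = sZ') := by
  rw [Pset, Set.mem_setOf_eq, faces_L1, faces_L2]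
  tauto

theorem L1_mem_P : sL1 ∈ Pset := memP.mpr (Or.inl rfl)

theorem complexP : IsPolyComplex Pset := by
  refine ⟨⟨sL1, L1_mem_P⟩, ?_, ?_, ?_, ?_⟩
  · refine Set.Finite.subset (s := {sL1, sR0, sRD, sZ, sL2, sR1', sRD', sZ'}) ?_ ?_
    · exact (((((((Set.finite_singleton sZ').insert sRD').insert sR1').insert
        sL2).insert sZ).insert sRD).insert sR0).insert sL1
    · intro S hS
      rw [memP] at hS
      rcases hS with rfl | rfl | rfl | rfl | rfl | rfl | rfl | rfl <;> simp
  · intro S hS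
    rw [memP] at hS
    rcases hS with rfl | rfl | rfl | rfl | rfl | rfl | rfl | rfl
    exacts [⟨poly_L1, ⟨0, zero_mem_L1⟩⟩, ⟨poly_R0, ⟨0, zero_mem_R0⟩⟩,
      ⟨poly_RD, ⟨0, zero_mem_RD⟩⟩, ⟨poly_Z, ⟨0, zero_mem_Z⟩⟩,
      ⟨poly_L2, ⟨q2, q2_mem_L2⟩⟩, ⟨poly_R1', ⟨q2, q2_mem_R1'⟩⟩,
      ⟨poly_RD', ⟨q2, q2_mem_RD'⟩⟩, ⟨poly_Z', ⟨q2, q2_mem_Z'⟩⟩]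
  · intro S hS F hF
    rw [memP] at hS
    rw [memP]
    rcases hS with rfl | rfl | rfl | rfl | rfl | rfl | rfl | rfl
    · rcases faces_L1.mp hF with rfl | rfl | rfl | rfl <;> tauto
    · rcases faces_R0.mp hF with rfl | rfl <;> tauto
    · rcases faces_RD.mp hF with rfl | rfl <;> tauto
    · rcases faces_Z.mp hF with rfl <;> tauto
    · rcases faces_L2.mp hF with rfl | rfl | rfl | rfl <;> tauto
    · rcases faces_R1'.mp hF with rfl | rfl <;> tauto
    · rcases faces_RD'.mp hF with rfl | rfl <;> tauto
    · rcases faces_Z'.mp hF with rfl <;> tauto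
  · intro S hS T hT hne
    rw [memP] at hS hT
    exact interP S T hS hT hne

theorem memR {C : Set (Fin 3 → ℝ)} : C ∈ recComplex Pset ↔
    (C = sL1 ∨ C = sL2' ∨ C = sR0 ∨ C = sR1 ∨ C = sRD ∨ C = sZ) := by
  constructor
  · rintro ⟨L, hL, rfl⟩
    rw [memP] at hL
    rcases hL with rfl | rfl | rfl | rfl | rfl | rfl | rfl | rfl
    · rw [recPoly_L1]; tauto
    · rw [recPoly_R0]; tauto
    · rw [recPoly_RD]; tauto
    · rw [recPoly_Z]; tauto
    · rw [recPoly_L2]; tauto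
    · rw [recPoly_R1']; tauto
    · rw [recPoly_RD']; tauto
    · rw [recPoly_Z']; tauto
  · rintro (rfl | rfl | rfl | rfl | rfl | rfl)
    · exact ⟨sL1, memP.mpr (Or.inl rfl), recPoly_L1.symm⟩
    · exact ⟨sL2, memP.mpr (by tauto), recPoly_L2.symm⟩
    · exact ⟨sR0, memP.mpr (by tauto), recPoly_R0.symm⟩
    · exact ⟨sR1', memP.mpr (by tauto), recPoly_R1'.symm⟩
    · exact ⟨sRD, memP.mpr (by tauto), recPoly_RD.symm⟩
    · exact ⟨sZ, memP.mpr (by tauto), recPoly_Z.symm⟩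

theorem fanR : IsFan (recComplex Pset) := by
  refine ⟨⟨⟨⟨sL1, memR.mpr (Or.inl rfl)⟩, ?_, ?_, ?_, ?_⟩, ?_⟩, ?_⟩
  · refine Set.Finite.subset (s := {sL1, sL2', sR0, sR1, sRD, sZ}) ?_ ?_
    · exact (((((Set.finite_singleton sZ).insert sRD).insert sR1).insert
        sR0).insert sL2').insert sL1
    · intro S hS
      rw [memR] at hS
      rcases hS with rfl | rfl | rfl | rfl | rfl | rfl <;> simp
  · intro S hS
    rw [memR] at hS
    rcases hS with rfl | rfl | rfl | rfl | rfl | rfl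
    exacts [⟨poly_L1, ⟨0, zero_mem_L1⟩⟩, ⟨poly_L2', ⟨0, zero_mem_L2'⟩⟩,
      ⟨poly_R0, ⟨0, zero_mem_R0⟩⟩, ⟨poly_R1, ⟨0, zero_mem_R1⟩⟩,
      ⟨poly_RD, ⟨0, zero_mem_RD⟩⟩, ⟨poly_Z, ⟨0, zero_mem_Z⟩⟩]
  · intro S hS F hF
    rw [memR] at hS
    rw [memR]
    rcases hS with rfl | rfl | rfl | rfl | rfl | rfl
    · rcases faces_L1.mp hF with rfl | rfl | rfl | rfl <;> tauto
    · rcases faces_L2'.mp hF with rfl | rfl | rfl | rfl <;> tauto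
    · rcases faces_R0.mp hF with rfl | rfl <;> tauto
    · rcases faces_R1.mp hF with rfl | rfl <;> tauto
    · rcases faces_RD.mp hF with rfl | rfl <;> tauto
    · rcases faces_Z.mp hF with rfl <;> tauto
  · intro S hS T hT _
    rw [memR] at hS hT
    exact interR S T hS hT
  · intro S hS
    rw [memR] at hS
    rcases hS with rfl | rfl | rfl | rfl | rfl | rfl
    exacts [cone_L1, cone_L2', cone_R0, cone_R1, cone_RD, cone_Z]
  · intro S hS
    rw [memR] at hS
    rcases hS with rfl | rfl | rfl | rfl | rfl | rfl
    exacts [sc_L1, sc_L2', sc_R0, sc_R1, sc_RD, sc_Z]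

/-! ### The support and its recession cone -/

theorem support_eq : polySupport Pset = sL1 ∪ sL2 := by
  apply Set.Subset.antisymm
  · intro x hx
    simp only [polySupport, Set.mem_iUnion] at hx
    obtain ⟨S, hS, hxS⟩ := hx
    rw [memP] at hS
    rcases hS with rfl | rfl | rfl | rfl | rfl | rfl | rfl | rfl
    exacts [Or.inl hxS, Or.inl (sub_R0_L1 hxS), Or.inl (sub_RD_L1 hxS),
      Or.inl (sub_Z_L1 hxS), Or.inr hxS, Or.inr (sub_R1'_L2 hxS),
      Or.inr (sub_RD'_L2 hxS), Or.inr (sub_Z'_L2 hxS)]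
  · rintro x (hx | hx)
    · exact Set.mem_biUnion L1_mem_P hx
    · exact Set.mem_biUnion (memP.mpr (by tauto) : sL2 ∈ Pset) hx

theorem recSub : recSet (sL1 ∪ sL2) ⊆ sRD := by
  intro u hu
  simp only [recSet, Set.mem_iInter] at hu
  have h1 : (0 : Fin 3 → ℝ) + (1:ℝ) • u ∈ sL1 ∪ sL2 :=
    hu 0 (Set.mem_union_left _ zero_mem_L1) 1 zero_le_one
  have hh : (0 : Fin 3 → ℝ) + (2⁻¹:ℝ) • u ∈ sL1 ∪ sL2 :=
    hu 0 (Set.mem_union_left _ zero_mem_L1) 2⁻¹ (by norm_num)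
  rw [zero_add, one_smul] at h1
  rw [zero_add] at hh
  have key : u 2 = 0 ∧ u ∈ sL1 := by
    rcases h1 with h | h
    · exact ⟨h.2.2, h⟩
    · exfalso
      have hs : ((2⁻¹:ℝ) • u) 2 = 2⁻¹ := by
        have := h.2.2
        simp [this]
      rcases hh with h' | h'
      · rw [h'.2.2] at hs; norm_num at hs
      · rw [h'.2.2] at hs; norm_num at hs
  obtain ⟨hu2, huL1⟩ := key
  have h2 : q2 + (1:ℝ) • u ∈ sL1 ∪ sL2 :=
    hu q2 (Set.mem_union_right _ q2_mem_L2) 1 zero_le_one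
  rw [one_smul] at h2
  have hq2u : (q2 + u) 2 = 1 := by simp [q2, hu2]
  rcases h2 with h | h
  · rw [h.2.2] at hq2u; norm_num at hq2u
  · have ha : (0:ℝ) ≤ u 0 := by
      have := h.1
      simpa [q2] using this
    have hb : u 0 ≤ u 1 := by
      have h' := h.2.1
      simp [q2, Pi.add_apply] at h'
      linarith
    exact ⟨le_antisymm hb huL1.2.1, huL1.1, hu2⟩

theorem gE0_mem_L1 : gE0 ∈ sL1 := by refine ⟨?_, ?_, ?_⟩ <;> simp [gE0]

theorem finalR : recSet (polySupport Pset) ⊂ ⋃ Λ ∈ Pset, recPoly Λ := by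
  rw [support_eq, Set.ssubset_def]
  constructor
  · intro u hu
    exact Set.mem_biUnion L1_mem_P (by rw [recPoly_L1]; exact sub_RD_L1 (recSub hu))
  · intro hcon
    have h1 : gE0 ∈ ⋃ Λ ∈ Pset, recPoly Λ :=
      Set.mem_biUnion L1_mem_P (by rw [recPoly_L1]; exact gE0_mem_L1)
    have h2 := recSub (hcon h1)
    have h3 := h2.1
    simp [gE0] at h3

end St16


/-- Example 1(2): the polyhedral complex `Π` in `ℝ³`
consisting of all faces of `{(x₁,x₂,0) | x₁ ≥ x₂ ≥ 0}` and
`{(x₁,x₂,1) | x₂ ≥ x₁ ≥ 0}` has `rec(Π)` a fan, yet `rec(|Π|)` is a proper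
subset of `⋃_{Λ ∈ Π} rec(Λ)`. -/
theorem statement16 :
    let Λ₁ : Set (Fin 3 → ℝ) := {x | 0 ≤ x 1 ∧ x 1 ≤ x 0 ∧ x 2 = 0}
    let Λ₂ : Set (Fin 3 → ℝ) := {x | 0 ≤ x 0 ∧ x 0 ≤ x 1 ∧ x 2 = 1}
    let P : Set (Set (Fin 3 → ℝ)) := {S | IsFaceOf S Λ₁ ∨ IsFaceOf S Λ₂}
    IsPolyComplex P ∧
    IsFan (recComplex P) ∧
    recSet (polySupport P) ⊂ ⋃ Λ ∈ P, recPoly Λ := by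
  intro Λ₁ Λ₂ P
  exact ⟨St16.complexP, St16.fanR, St16.finalR⟩
end

section
/- Let Σ be a complete conic polyhedral complex in ℝⁿ × ℝ_{≥0} (i.e., with support equal to ℝⁿ × ℝ_{≥0}), and let aff(Σ) be the polyhedral complex in ℝⁿ obtained by intersecting the cones of Σ with the hyperplane ℝⁿ × {1}. Then c(aff(Σ)) = Σ. -/
open Set Pointwise

variable {E : Type*} [NormedAddCommGroup E] [NormedSpace ℝ E]

lemma aux_mem_relint {s : Set E} {x : E} :
    x ∈ intrinsicInterior ℝ s ↔ x ∈ affineSpan ℝ s ∧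
      ∃ ε > 0, ∀ y ∈ affineSpan ℝ s, dist y x < ε → y ∈ s := by
  constructor
  · rintro ⟨y, hy, rfl⟩
    rw [mem_interior_iff_mem_nhds, Metric.mem_nhds_iff] at hy
    obtain ⟨ε, hε, hball⟩ := hy
    refine ⟨y.2, ε, hε, fun z hz hd => ?_⟩
    have : (⟨z, hz⟩ : affineSpan ℝ s) ∈ Metric.ball y ε := by
      rw [Metric.mem_ball, Subtype.dist_eq]; exact hd
    exact hball this
  · rintro ⟨hx, ε, hε, hb⟩
    refine ⟨⟨x, hx⟩, ?_, rfl⟩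
    rw [mem_interior_iff_mem_nhds, Metric.mem_nhds_iff]
    refine ⟨ε, hε, fun z hz => ?_⟩
    exact hb z z.2 (by simpa [Subtype.dist_eq] using Metric.mem_ball.mp hz)

lemma aux_relint_extend {s : Set E} {p v : E} (hp : p ∈ intrinsicInterior ℝ s) (hv : v ∈ s) :
    ∃ t : ℝ, 0 < t ∧ p + t • (p - v) ∈ s := by
  rw [aux_mem_relint] at hp
  obtain ⟨hps, ε, hε, hb⟩ := hp
  set t := ε / (2 * (‖p - v‖ + 1)) with ht
  have htpos : 0 < t := by positivity
  refine ⟨t, htpos, ?_⟩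
  have hmem : p + t • (p - v) ∈ affineSpan ℝ s := by
    have := (affineSpan ℝ s).smul_vsub_vadd_mem t hps (subset_affineSpan ℝ s hv) hps
    simpa [vsub_eq_sub, vadd_eq_add, add_comm] using this
  refine hb _ hmem ?_
  have : dist (p + t • (p - v)) p = t * ‖p - v‖ := by
    rw [dist_eq_norm, add_sub_cancel_left, norm_smul, Real.norm_eq_abs, abs_of_pos htpos]
  rw [this]
  have h1 : t * ‖p - v‖ ≤ t * (‖p - v‖ + 1) := by nlinarith
  have h2 : t * (‖p - v‖ + 1) = ε / 2 := by
    rw [ht]; field_simp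
  linarith

section AuxBasics

variable {E : Type*} [NormedAddCommGroup E] [NormedSpace ℝ E]

lemma aux_poly_closed [FiniteDimensional ℝ E] {S : Set E} (h : IsPolyhedron S) :
    IsClosed S := by
  obtain ⟨m, f, b, rfl⟩ := h
  have : {x : E | ∀ i, f i x ≤ b i} = ⋂ i, {x : E | f i x ≤ b i} := by
    ext x; simp
  rw [this]
  exact isClosed_iInter fun i =>
    isClosed_le (f i).continuous_of_finiteDimensional continuous_const

lemma aux_poly_convex {S : Set E} (h : IsPolyhedron S) : Convex ℝ S := by
  obtain ⟨m, f, b, rfl⟩ := h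
  intro x hx y hy a c ha hc hac
  intro i
  have := hx i; have := hy i
  simp only [map_add, map_smul, smul_eq_mul]
  have e1 := mul_le_mul_of_nonneg_left (hx i) ha
  have e2 := mul_le_mul_of_nonneg_left (hy i) hc
  have e3 : a * b i + c * b i = b i := by rw [← add_mul, hac, one_mul]
  linarith

lemma aux_cone_zero {S : Set E} (h : IsPolyhedralCone S) : (0 : E) ∈ S := by
  obtain ⟨F, rfl⟩ := h
  exact ⟨fun _ => 0, fun _ => le_refl _, by simp⟩

lemma aux_cone_smul {S : Set E} (h : IsPolyhedralCone S) {a : ℝ} (ha : 0 ≤ a)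
    {x : E} (hx : x ∈ S) : a • x ∈ S := by
  obtain ⟨F, rfl⟩ := h
  obtain ⟨c, hc, rfl⟩ := hx
  refine ⟨fun v => a * c v, fun v => mul_nonneg ha (hc v), ?_⟩
  rw [Finset.smul_sum]
  exact Finset.sum_congr rfl fun v _ => by rw [smul_smul]

lemma aux_cone_add {S : Set E} (h : IsPolyhedralCone S) {x y : E}
    (hx : x ∈ S) (hy : y ∈ S) : x + y ∈ S := by
  obtain ⟨F, rfl⟩ := h
  obtain ⟨c, hc, rfl⟩ := hx
  obtain ⟨d, hd, rfl⟩ := hy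
  refine ⟨fun v => c v + d v, fun v => add_nonneg (hc v) (hd v), ?_⟩
  rw [← Finset.sum_add_distrib]
  exact Finset.sum_congr rfl fun v _ => (add_smul (c v) (d v) v).symm

lemma aux_mem_faceSet {S : Set E} {x : E →ₗ[ℝ] ℝ} {u : E} :
    u ∈ faceSet S x ↔ u ∈ S ∧ ∀ v ∈ S, x u ≤ x v := Iff.rfl

lemma aux_face_eq_of_relint {s : Set E} {p : E} {x : E →ₗ[ℝ] ℝ}
    (hp : p ∈ intrinsicInterior ℝ s) (hpf : p ∈ faceSet s x) : faceSet s x = s := by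
  refine Subset.antisymm (fun u hu => hu.1) fun v hv => ?_
  obtain ⟨t, ht, hmem⟩ := aux_relint_extend hp hv
  have h1 : x p ≤ x (p + t • (p - v)) := hpf.2 _ hmem
  have h2 : x (p + t • (p - v)) = x p + t * (x p - x v) := by
    simp only [map_add, map_smul, map_sub, smul_eq_mul]
  have h3 : x p ≤ x v := hpf.2 v hv
  have hxv : x v = x p := by nlinarith
  exact ⟨hv, fun w hw => by rw [hxv]; exact hpf.2 w hw⟩

end AuxBasics

set_option maxHeartbeats 1000000 in
/-- for a complete conic polyhedral complex `Σ` in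
`ℝⁿ × ℝ_{≥0}`, one has `c(aff(Σ)) = Σ`. -/
theorem statement18 {n : ℕ} (Q : Set (Set ((Fin n → ℝ) × ℝ)))
    (hQ : IsConicPolyComplex Q)
    (hcomp : polySupport Q = {y : (Fin n → ℝ) × ℝ | 0 ≤ y.2}) :
    coneComplex (affOf Q) = Q := by
  classical
  obtain ⟨⟨hQne, hQfin, hmem, hface, hcommon⟩, hcone⟩ := hQ
  have hclosed : ∀ S ∈ Q, IsClosed S := fun S hS => aux_poly_closed (hmem S hS).1
  have hconv : ∀ S ∈ Q, Convex ℝ S := fun S hS => aux_poly_convex (hmem S hS).1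
  have hzero : ∀ S ∈ Q, (0 : (Fin n → ℝ) × ℝ) ∈ S := fun S hS => aux_cone_zero (hcone S hS)
  have hsmul : ∀ S ∈ Q, ∀ a : ℝ, 0 ≤ a → ∀ x ∈ S, a • x ∈ S :=
    fun S hS a ha x hx => aux_cone_smul (hcone S hS) ha hx
  have hadd : ∀ S ∈ Q, ∀ x ∈ S, ∀ y ∈ S, x + y ∈ S :=
    fun S hS x hx y hy => aux_cone_add (hcone S hS) hx hy
  have hht : ∀ S ∈ Q, ∀ x ∈ S, (0:ℝ) ≤ x.2 := by
    intro S hS x hx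
    have : x ∈ polySupport Q := mem_biUnion hS hx
    rw [hcomp] at this; exact this
  -- relint-based subset lemma
  have hsub : ∀ S ∈ Q, ∀ T ∈ Q, ∀ p, p ∈ intrinsicInterior ℝ S → p ∈ T → S ⊆ T := by
    intro S hS T hT p hpS hpT
    have hpS' : p ∈ S := intrinsicInterior_subset hpS
    obtain ⟨⟨hne, x, hx⟩, _⟩ := hcommon S hS T hT ⟨p, hpS', hpT⟩
    have heq : S ∩ T = S := by
      rw [hx]
      exact aux_face_eq_of_relint hpS (hx ▸ (⟨hpS', hpT⟩ : p ∈ S ∩ T))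
    exact fun u hu => ((le_of_eq heq.symm : S ⊆ S ∩ T) hu).2
  -- the height-zero face
  have hzface : ∀ S ∈ Q, {y ∈ S | y.2 = 0} ∈ Q := by
    intro S hS
    have heq : {y ∈ S | y.2 = 0} = faceSet S (LinearMap.snd ℝ (Fin n → ℝ) ℝ) := by
      ext u
      simp only [mem_setOf_eq, aux_mem_faceSet, LinearMap.snd_apply]
      constructor
      · rintro ⟨hu, h0⟩; exact ⟨hu, fun v hv => by rw [h0]; exact hht S hS v hv⟩
      · rintro ⟨hu, hmin⟩
        have h0 := hmin 0 (hzero S hS)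
        exact ⟨hu, le_antisymm (by simpa using h0) (hht S hS u hu)⟩
    have hne : {y ∈ S | y.2 = 0}.Nonempty := ⟨0, hzero S hS, rfl⟩
    exact hface S hS _ ⟨hne, _, heq⟩
  -- coneOver reconstruction
  have hconeeq : ∀ S ∈ Q, ∀ u0 : Fin n → ℝ, (u0, (1:ℝ)) ∈ S →
      coneOver {u | (u, (1:ℝ)) ∈ S} = S := by
    intro S hS u0 hu0
    apply Subset.antisymm
    · apply closure_minimal _ (hclosed S hS)
      rintro y ⟨u, hu, t, ht, rfl⟩
      exact hsmul S hS t ht.le _ hu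
    · intro x hx
      rw [coneOver, Metric.mem_closure_iff]
      intro ε hε
      set q : (Fin n → ℝ) × ℝ := (u0, (1:ℝ)) with hq
      set δ := ε / (2 * (‖q‖ + 1)) with hδ
      have hδpos : 0 < δ := by positivity
      set y := x + δ • q with hy
      have hyS : y ∈ S := hadd S hS x hx _ (hsmul S hS δ hδpos.le _ hu0)
      have hy2 : y.2 = x.2 + δ := by simp [hy, hq]
      have hy2pos : 0 < y.2 := by rw [hy2]; have := hht S hS x hx; linarith
      refine ⟨y, ⟨(y.2)⁻¹ • y.1, ?_, y.2, hy2pos, ?_⟩, ?_⟩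
      · have h1 : (y.2)⁻¹ • y ∈ S := hsmul S hS _ (by positivity) y hyS
        have h2 : ((y.2)⁻¹ • y) = ((y.2)⁻¹ • y.1, (1:ℝ)) := by
          rw [Prod.smul_def]
          exact congrArg _ (by simp [smul_eq_mul, inv_mul_cancel₀ hy2pos.ne'])
        rwa [h2] at h1
      · rw [Prod.smul_mk, smul_smul, mul_inv_cancel₀ hy2pos.ne', one_smul, smul_eq_mul, mul_one]
      · have : dist x y = δ * ‖q‖ := by
          rw [hy, dist_eq_norm]
          simp [norm_smul, abs_of_pos hδpos]
        rw [this]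
        have h1 : δ * ‖q‖ ≤ δ * (‖q‖ + 1) := by nlinarith [norm_nonneg q]
        have h2 : δ * (‖q‖ + 1) = ε / 2 := by rw [hδ]; field_simp
        linarith
  -- recPoly computation
  have hprodeq : ∀ S : Set ((Fin n → ℝ) × ℝ),
      ({u : Fin n → ℝ | (u, (0:ℝ)) ∈ S} ×ˢ ({0} : Set ℝ)) = {y ∈ S | y.2 = 0} := by
    intro S
    ext y
    simp only [mem_prod, mem_setOf_eq, mem_singleton_iff]
    constructor
    · rintro ⟨h1, h2⟩
      have he : ((y.1, (0:ℝ)) : (Fin n → ℝ) × ℝ) = y := by rw [← h2]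
      exact ⟨he ▸ h1, h2⟩
    · rintro ⟨h1, h2⟩
      have he : ((y.1, (0:ℝ)) : (Fin n → ℝ) × ℝ) = y := by rw [← h2]
      exact ⟨he ▸ h1, h2⟩
  have hreceq : ∀ S ∈ Q, ∀ u0 : Fin n → ℝ, (u0, (1:ℝ)) ∈ S →
      recPoly {u | (u, (1:ℝ)) ∈ S} = {u | (u, (0:ℝ)) ∈ S} := by
    intro S hS u0 hu0
    apply Subset.antisymm
    · intro u hu
      have hk : ∀ k : ℕ, ((u0 + (k:ℝ) • u, (1:ℝ)) : (Fin n → ℝ) × ℝ) ∈ S := by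
        intro k
        induction k with
        | zero => simpa using hu0
        | succ k ih =>
          have step := hu _ ih
          have he : u0 + ((k+1:ℕ):ℝ) • u = (u0 + (k:ℝ) • u) + u := by
            push_cast
            rw [add_smul, one_smul, add_assoc]
          rw [he]
          exact step
      show ((u, (0:ℝ)) : (Fin n → ℝ) × ℝ) ∈ S
      rw [← (hclosed S hS).closure_eq, Metric.mem_closure_iff]
      intro ε hε
      obtain ⟨k, hkgt⟩ := exists_nat_gt ((‖u0‖ + 1)/ε)
      set M : ℝ := (k:ℝ) + 1 with hM
      have hMpos : 0 < M := by positivity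
      have hMgt : (‖u0‖ + 1)/ε < M := by rw [hM]; linarith
      have hmemS : ((u0 + M • u, (1:ℝ)) : (Fin n → ℝ) × ℝ) ∈ S := by
        have := hk (k+1)
        have hcast : ((k+1:ℕ):ℝ) = M := by rw [hM]; push_cast; ring
        rwa [hcast] at this
      refine ⟨M⁻¹ • (u0 + M • u, (1:ℝ)), hsmul S hS _ (by positivity) _ hmemS, ?_⟩
      have hb : (M⁻¹ • ((u0 + M • u, (1:ℝ)) : (Fin n → ℝ) × ℝ)) = (M⁻¹ • u0 + u, M⁻¹) := by
        rw [Prod.smul_mk, smul_add, smul_smul, inv_mul_cancel₀ hMpos.ne', one_smul,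
          smul_eq_mul, mul_one]
      rw [hb, Prod.dist_eq]
      have hd1 : dist u (M⁻¹ • u0 + u) = M⁻¹ * ‖u0‖ := by
        rw [dist_eq_norm]
        have : u - (M⁻¹ • u0 + u) = -(M⁻¹ • u0) := by abel
        rw [this, norm_neg, norm_smul, Real.norm_eq_abs, abs_of_pos (by positivity)]
      have hd2 : dist (0:ℝ) M⁻¹ = M⁻¹ := by
        rw [Real.dist_eq, zero_sub, abs_neg, abs_of_pos (inv_pos.mpr hMpos)]
      have hkey : M⁻¹ * (‖u0‖ + 1) < ε := by
        have h1 : ‖u0‖ + 1 < M * ε := by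
          rw [div_lt_iff₀ hε] at hMgt; linarith
        have h2 : M⁻¹ * M = 1 := inv_mul_cancel₀ hMpos.ne'
        have h3 := mul_lt_mul_of_pos_left h1 (inv_pos.mpr hMpos)
        have h4 : M⁻¹ * (M * ε) = ε := by rw [← mul_assoc, h2, one_mul]
        linarith
      have : max (M⁻¹ * ‖u0‖) M⁻¹ ≤ M⁻¹ * (‖u0‖ + 1) := by
        apply max_le
        · nlinarith [inv_pos.mpr hMpos]
        · nlinarith [inv_pos.mpr hMpos, norm_nonneg u0]
      calc max (dist u (M⁻¹ • u0 + u)) (dist (0:ℝ) M⁻¹)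
          = max (M⁻¹ * ‖u0‖) M⁻¹ := by rw [hd1, hd2]
        _ ≤ M⁻¹ * (‖u0‖ + 1) := this
        _ < ε := hkey
    · intro u hu
      intro x hx
      have := hadd S hS _ hx _ hu
      show ((x + u, (1:ℝ)) : (Fin n → ℝ) × ℝ) ∈ S
      have he : ((x + u, (1:ℝ)) : (Fin n → ℝ) × ℝ) = (x, (1:ℝ)) + (u, (0:ℝ)) := by
        rw [Prod.mk_add_mk, add_zero]
      rw [he]; exact this
  -- HARD PART: every member at height zero is the height-zero slice of a member
  -- having a point at height one.
  have hhard : ∀ σ ∈ Q, (∀ y ∈ σ, y.2 = (0:ℝ)) →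
      ∃ τ ∈ Q, (∃ u0 : Fin n → ℝ, ((u0, (1:ℝ)) : (Fin n → ℝ) × ℝ) ∈ τ) ∧
        σ = {y ∈ τ | y.2 = 0} := by
    intro σ hσ hσ0
    obtain ⟨p, hp⟩ := Set.Nonempty.intrinsicInterior (hconv σ hσ) (hmem σ hσ).2
    have hpσ : p ∈ σ := intrinsicInterior_subset hp
    have hp2 : p.2 = 0 := hσ0 p hpσ
    set 𝒮 : Set (Set ((Fin n → ℝ) × ℝ)) :=
      {τ | τ ∈ Q ∧ σ ⊆ τ ∧ ∃ y ∈ τ, y.2 ≠ (0:ℝ)} with h𝒮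
    -- 𝒮 is nonempty
    have h𝒮ne : 𝒮.Nonempty := by
      have hq : ∀ k : ℕ, ∃ T, T ∈ Q ∧ ((p.1, ((k:ℝ)+1)⁻¹) : (Fin n → ℝ) × ℝ) ∈ T := by
        intro k
        have hmem' : ((p.1, ((k:ℝ)+1)⁻¹) : (Fin n → ℝ) × ℝ) ∈ polySupport Q := by
          rw [hcomp]
          show (0:ℝ) ≤ ((k:ℝ)+1)⁻¹
          positivity
        simpa [polySupport, mem_iUnion] using hmem'
      choose g hgQ hgmem using hq
      have hex : ∃ T ∈ Q, {k | g k = T}.Infinite := by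
        by_contra hcon
        push_neg at hcon
        have hcov : (Set.univ : Set ℕ) ⊆ ⋃ T ∈ Q, {k | g k = T} :=
          fun k _ => mem_biUnion (hgQ k) rfl
        have hfin : (Set.univ : Set ℕ).Finite :=
          (Set.Finite.biUnion hQfin fun T hT =>
            hcon T hT).subset hcov
        exact Set.infinite_univ hfin
      obtain ⟨T, hTQ, hinf⟩ := hex
      have hpT : p ∈ T := by
        rw [← (hclosed T hTQ).closure_eq, Metric.mem_closure_iff]
        intro ε hε
        obtain ⟨k, hkmem, hkgt⟩ := hinf.exists_gt ⌈1/ε⌉₊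
        refine ⟨(p.1, ((k:ℝ)+1)⁻¹), by rw [← hkmem]; exact hgmem k, ?_⟩
        have hc1 : (1:ℝ)/ε ≤ (⌈1/ε⌉₊ : ℝ) := Nat.le_ceil _
        have hc2 : ((⌈1/ε⌉₊ : ℕ) : ℝ) < (k:ℝ) := by exact_mod_cast hkgt
        have hkpos : (0:ℝ) < (k:ℝ) + 1 := by positivity
        have hlt : ((k:ℝ)+1)⁻¹ < ε := by
          have h1 : (1:ℝ) < ε * ((k:ℝ)+1) := by
            rw [div_le_iff₀ hε] at hc1
            nlinarith
          have h2 : ((k:ℝ)+1)⁻¹ * ((k:ℝ)+1) = 1 := inv_mul_cancel₀ hkpos.ne'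
          nlinarith [inv_pos.mpr hkpos]
        have hd : dist p ((p.1, ((k:ℝ)+1)⁻¹) : (Fin n → ℝ) × ℝ) = ((k:ℝ)+1)⁻¹ := by
          rw [Prod.dist_eq]
          have : dist p.1 p.1 = 0 := dist_self _
          rw [this, Real.dist_eq, hp2, zero_sub, abs_neg, abs_of_pos (inv_pos.mpr hkpos)]
          exact max_eq_right (inv_pos.mpr hkpos).le
        rw [hd]; exact hlt
      obtain ⟨k0, hk0⟩ := hinf.nonempty
      refine ⟨T, hTQ, hsub σ hσ T hTQ p hp hpT, (p.1, ((k0:ℝ)+1)⁻¹), ?_, ?_⟩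
      · rw [← hk0]; exact hgmem k0
      · show ((k0:ℝ)+1)⁻¹ ≠ 0
        positivity
    -- take a minimal element
    have h𝒮fin : 𝒮.Finite := hQfin.subset fun T hT => hT.1
    obtain ⟨τ, hτ𝒮, hτmin'⟩ := h𝒮fin.exists_minimal h𝒮ne
    have hτmin : ∀ a' ∈ 𝒮, id a' ≤ id τ → id τ = id a' :=
      fun a' ha' hle => le_antisymm (hτmin' ha' hle) hle
    obtain ⟨hτQ, hστ, y0, hy0τ, hy0⟩ := hτ𝒮
    have hpτ' : p ∈ τ := hστ hpσ
    have hy0pos : 0 < y0.2 := lt_of_le_of_ne (hht τ hτQ y0 hy0τ) (Ne.symm hy0)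
    set q1 := (y0.2)⁻¹ • y0 with hq1
    have hq1τ : q1 ∈ τ := hsmul τ hτQ _ (by positivity) _ hy0τ
    have hq12 : q1.2 = 1 := by
      rw [hq1, Prod.smul_snd, smul_eq_mul, inv_mul_cancel₀ hy0pos.ne']
    -- polyhedron representation of τ
    obtain ⟨m, f, b, hrep⟩ := (hmem τ hτQ).1
    have hfb : ∀ x ∈ τ, ∀ i, f i x ≤ b i := fun x hx => by rw [hrep] at hx; exact hx
    have hmemτ : ∀ x, (∀ i, f i x ≤ b i) → x ∈ τ := fun x hx => by rw [hrep]; exact hx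
    set J : Set (Fin m) := {i | ∃ y ∈ τ, f i y < b i} with hJ
    have hspan0 : ∀ i, i ∉ J → ∀ y ∈ affineSpan ℝ τ, f i y = b i := by
      intro i hiJ y hy
      have hτi : ∀ z ∈ τ, f i z = b i := by
        intro z hz
        rcases lt_or_eq_of_le (hfb z hz i) with h | h
        · exact absurd ⟨z, hz, h⟩ hiJ
        · exact h
      refine affineSpan_induction (p := fun z => f i z = b i) hy hτi ?_
      intro c u v w hu hv hw
      simp only [vsub_eq_sub, vadd_eq_add, map_add, map_smul, map_sub, hu, hv, hw,
        smul_eq_mul, sub_self, mul_zero, zero_add]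
    -- Lemma B: good radius
    have hBr : ∃ r > (0:ℝ), ∀ x ∈ τ, dist x p < r → x.2 ≠ 0 →
        x ∈ intrinsicInterior ℝ τ := by
      have hOopen : IsOpen (⋂ i ∈ Finset.univ.filter (fun i => f i p < b i),
          {y : (Fin n → ℝ) × ℝ | f i y < b i}) :=
        isOpen_biInter_finset fun i _ =>
          isOpen_lt (f i).continuous_of_finiteDimensional continuous_const
      have hpO : p ∈ ⋂ i ∈ Finset.univ.filter (fun i => f i p < b i),
          {y : (Fin n → ℝ) × ℝ | f i y < b i} := by
        simp only [mem_iInter, Finset.mem_filter, Finset.mem_univ, true_and, mem_setOf_eq]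
        exact fun i hi => hi
      obtain ⟨r, hr, hball⟩ := Metric.isOpen_iff.mp hOopen p hpO
      refine ⟨r, hr, ?_⟩
      intro x hxτ hxr hx2
      by_cases hcase : ∀ i ∈ J, f i x < b i
      · rw [aux_mem_relint]
        refine ⟨subset_affineSpan ℝ τ hxτ, ?_⟩
        have hO'open : IsOpen (⋂ i ∈ Finset.univ.filter (fun i => i ∈ J),
            {y : (Fin n → ℝ) × ℝ | f i y < b i}) :=
          isOpen_biInter_finset fun i _ =>
            isOpen_lt (f i).continuous_of_finiteDimensional continuous_const
        have hxO' : x ∈ ⋂ i ∈ Finset.univ.filter (fun i => i ∈ J),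
            {y : (Fin n → ℝ) × ℝ | f i y < b i} := by
          simp only [mem_iInter, Finset.mem_filter, Finset.mem_univ, true_and, mem_setOf_eq]
          exact fun i hi => hcase i hi
        obtain ⟨ε, hε, hball'⟩ := Metric.isOpen_iff.mp hO'open x hxO'
        refine ⟨ε, hε, fun y hy hdy => ?_⟩
        apply hmemτ
        intro i
        by_cases hiJ : i ∈ J
        · have hyO : y ∈ ⋂ i ∈ Finset.univ.filter (fun i => i ∈ J),
              {y : (Fin n → ℝ) × ℝ | f i y < b i} :=
            hball' (Metric.mem_ball.mpr hdy)
          simp only [mem_iInter, Finset.mem_filter, Finset.mem_univ, true_and,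
            mem_setOf_eq] at hyO
          exact (hyO i hiJ).le
        · exact le_of_eq (hspan0 i hiJ y hy)
      · push_neg at hcase
        obtain ⟨i, hiJ, hge⟩ := hcase
        have hfeq : f i x = b i := le_antisymm (hfb x hxτ i) hge
        have hpact : f i p = b i := by
          by_contra hne
          have hxball : x ∈ Metric.ball p r := Metric.mem_ball.mpr hxr
          have hxO := hball hxball
          simp only [mem_iInter, Finset.mem_filter, Finset.mem_univ, true_and,
            mem_setOf_eq] at hxO
          have hplt : f i p < b i := lt_of_le_of_ne (hfb p hpτ' i) hne
          exact absurd hfeq (ne_of_lt (hxO i hplt))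
        set F := {u ∈ τ | f i u = b i} with hF
        have hFface : IsFaceOf F τ := by
          refine ⟨⟨x, hxτ, hfeq⟩, -(f i), ?_⟩
          ext u
          simp only [hF, faceSet, mem_setOf_eq, LinearMap.neg_apply, neg_le_neg_iff]
          constructor
          · rintro ⟨hu, hue⟩
            exact ⟨hu, fun v hv => by rw [hue]; exact hfb v hv i⟩
          · rintro ⟨hu, hge'⟩
            have h1 := hge' x hxτ
            exact ⟨hu, le_antisymm (hfb u hu i) (hfeq ▸ h1)⟩
        have hFQ : F ∈ Q := hface τ hτQ F hFface
        have hpF : p ∈ F := ⟨hpτ', hpact⟩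
        have hσF : σ ⊆ F := hsub σ hσ F hFQ p hp hpF
        have hFτ : F ⊆ τ := fun u hu => hu.1
        have hFneτ : F ≠ τ := by
          obtain ⟨y', hy'τ, hylt⟩ := hiJ
          intro heqFτ
          have : y' ∈ F := heqFτ ▸ hy'τ
          exact absurd this.2 (ne_of_lt hylt)
        have hF0 : ∀ y ∈ F, y.2 = (0:ℝ) := by
          by_contra hcon
          push_neg at hcon
          obtain ⟨y', hy'F, hy'2⟩ := hcon
          have hF𝒮 : F ∈ 𝒮 := ⟨hFQ, hσF, y', hy'F, hy'2⟩
          exact hFneτ (hτmin F hF𝒮 hFτ).symm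
        exact absurd (hF0 x ⟨hxτ, hfeq⟩) hx2
    obtain ⟨r, hrpos, hB⟩ := hBr
    -- a point of τ at positive height near p
    set t0 : ℝ := min 1 (r / (2 * (dist q1 p + 1))) with ht0
    have ht0pos : 0 < t0 := lt_min one_pos (by positivity)
    have ht0le : t0 ≤ 1 := min_le_left _ _
    set x0 := p + t0 • (q1 - p) with hx0
    have hx0eq : x0 = (1 - t0) • p + t0 • q1 := by
      rw [hx0, smul_sub, sub_smul, one_smul]; abel
    have hx0τ : x0 ∈ τ := by
      rw [hx0eq]
      exact (hconv τ hτQ) hpτ' hq1τ (by linarith) ht0pos.le (by ring)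
    have hx02 : x0.2 = t0 := by
      rw [hx0, Prod.snd_add, Prod.smul_snd, Prod.snd_sub, hp2, hq12, smul_eq_mul]
      ring
    have hx0r : dist x0 p < r := by
      have hxfor : x0 - p = t0 • (q1 - p) := by rw [hx0]; abel
      rw [dist_eq_norm, hxfor, norm_smul, Real.norm_eq_abs, abs_of_pos ht0pos]
      have h1 : t0 ≤ r / (2 * (dist q1 p + 1)) := min_le_right _ _
      have h2 : ‖q1 - p‖ = dist q1 p := (dist_eq_norm q1 p).symm
      rw [h2]
      have h3 : t0 * (2 * (dist q1 p + 1)) ≤ r := by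
        rw [← le_div_iff₀ (by positivity)]; exact h1
      nlinarith [dist_nonneg (x := q1) (y := p), mul_pos ht0pos
        (show (0:ℝ) < dist q1 p + 2 by positivity)]
    -- Claim N : points of the affine span at positive height near p are in τ
    have hN : ∀ y', y' ∈ affineSpan ℝ τ → 0 < y'.2 → dist y' p < r → y' ∈ τ := by
      intro y' hy'span hy'2 hy'r
      by_contra hy'τ
      set K := {s : ℝ | s ∈ Icc (0:ℝ) 1 ∧ x0 + s • (y' - x0) ∈ τ} with hK
      have hK0 : (0:ℝ) ∈ K := by
        refine ⟨⟨le_refl 0, zero_le_one⟩, ?_⟩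
        show x0 + (0:ℝ) • (y' - x0) ∈ τ
        rw [zero_smul, add_zero]; exact hx0τ
      have hKclosed : IsClosed K := by
        have hKeq : K = Icc (0:ℝ) 1 ∩ (fun s : ℝ => x0 + s • (y' - x0)) ⁻¹' τ := rfl
        rw [hKeq]
        refine isClosed_Icc.inter (IsClosed.preimage ?_ (hclosed τ hτQ))
        exact continuous_const.add (continuous_id.smul continuous_const)
      have hKbdd : BddAbove K := ⟨1, fun s hs => hs.1.2⟩
      have hsmem := hKclosed.csSup_mem ⟨0, hK0⟩ hKbdd
      set sS := sSup K with hsS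
      set b' := x0 + sS • (y' - x0) with hb'
      have hb'τ : b' ∈ τ := hsmem.2
      have hsI : sS ∈ Icc (0:ℝ) 1 := hsmem.1
      have hb'eq : b' = (1 - sS) • x0 + sS • y' := by
        rw [hb', smul_sub, sub_smul, one_smul]; abel
      have hb'2 : 0 < b'.2 := by
        have he : b'.2 = (1 - sS) * x0.2 + sS * y'.2 := by
          rw [hb'eq, Prod.snd_add, Prod.smul_snd, Prod.smul_snd, smul_eq_mul, smul_eq_mul]
        rw [he, hx02]
        rcases eq_or_lt_of_le hsI.1 with h | h
        · rw [← h]; simpa using ht0pos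
        · nlinarith [hsI.2, mul_nonneg (sub_nonneg.mpr hsI.2) ht0pos.le,
            mul_pos h hy'2]
      have hb'r : dist b' p < r := by
        have he : b' - p = (1 - sS) • (x0 - p) + sS • (y' - p) := by
          rw [hb'eq]; module
        rw [dist_eq_norm, he]
        have h1 : ‖(1 - sS) • (x0 - p) + sS • (y' - p)‖ ≤
            (1 - sS) * ‖x0 - p‖ + sS * ‖y' - p‖ := by
          refine le_trans (norm_add_le _ _) ?_
          rw [norm_smul, norm_smul, Real.norm_eq_abs, Real.norm_eq_abs,
            abs_of_nonneg (sub_nonneg.mpr hsI.2), abs_of_nonneg hsI.1]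
        have h2 : ‖x0 - p‖ < r := by rw [← dist_eq_norm]; exact hx0r
        have h3 : ‖y' - p‖ < r := by rw [← dist_eq_norm]; exact hy'r
        have h4 : (1 - sS) * ‖x0 - p‖ + sS * ‖y' - p‖ < r := by
          rcases eq_or_lt_of_le hsI.1 with h | h
          · rw [← h]; simpa using h2
          · rcases eq_or_lt_of_le hsI.2 with h' | h'
            · rw [h']; simpa using h3
            · nlinarith [mul_lt_mul_of_pos_left h2 (show (0:ℝ) < 1 - sS by linarith),
                mul_lt_mul_of_pos_left h3 h]
        linarith
      have hb'relint := hB b' hb'τ hb'r hb'2.ne'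
      rw [aux_mem_relint] at hb'relint
      obtain ⟨hb'span, ε, hεpos, hball⟩ := hb'relint
      have hslt : sS < 1 := by
        rcases lt_or_eq_of_le hsI.2 with h | h
        · exact h
        · exfalso
          apply hy'τ
          have : b' = y' := by
            rw [hb', h, one_smul]; abel
          rwa [← this]
      set s' : ℝ := min 1 (sS + ε / (‖y' - x0‖ + 1)) with hs'
      have hs'gt : sS < s' := by
        apply lt_min hslt
        have : 0 < ε / (‖y' - x0‖ + 1) := by positivity
        linarith
      have hs'K : s' ∈ K := by
        refine ⟨⟨le_trans hsI.1 hs'gt.le, min_le_left _ _⟩, ?_⟩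
        show x0 + s' • (y' - x0) ∈ τ
        apply hball
        · have := (affineSpan ℝ τ).smul_vsub_vadd_mem s' hy'span
            (subset_affineSpan ℝ τ hx0τ) (subset_affineSpan ℝ τ hx0τ)
          simpa [vsub_eq_sub, vadd_eq_add, add_comm] using this
        · have he : (x0 + s' • (y' - x0)) - b' = (s' - sS) • (y' - x0) := by
            rw [hb', sub_smul]; abel
          rw [dist_eq_norm, he, norm_smul, Real.norm_eq_abs,
            abs_of_pos (sub_pos.mpr hs'gt)]
          have h1 : s' - sS ≤ ε / (‖y' - x0‖ + 1) := by
            have := min_le_right 1 (sS + ε / (‖y' - x0‖ + 1))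
            rw [← hs'] at this
            linarith
          have h2 : (s' - sS) * (‖y' - x0‖ + 1) ≤ ε := by
            rw [← le_div_iff₀ (by positivity)]; exact h1
          nlinarith [norm_nonneg (y' - x0), sub_pos.mpr hs'gt]
      have := le_csSup hKbdd hs'K
      rw [← hsS] at this
      linarith
    -- Claim C : points of the affine span at height 0 near p are in τ
    have hC : ∀ x', x' ∈ affineSpan ℝ τ → x'.2 = 0 → dist x' p < r/2 → x' ∈ τ := by
      intro x' hx's hx'2 hx'r
      rw [← (hclosed τ hτQ).closure_eq, Metric.mem_closure_iff]
      intro ε hε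
      set s : ℝ := min (ε / (2 * (‖q1‖ + 1))) ((r/2) / (2 * (‖q1‖ + 1))) with hs
      have hspos : 0 < s := lt_min (by positivity) (by positivity)
      set ys := x' + s • q1 with hys
      have hys_span : ys ∈ affineSpan ℝ τ := by
        have h0span : (0 : (Fin n → ℝ) × ℝ) ∈ affineSpan ℝ τ :=
          subset_affineSpan ℝ τ (hzero τ hτQ)
        have := (affineSpan ℝ τ).smul_vsub_vadd_mem s
          (subset_affineSpan ℝ τ hq1τ) h0span hx's
        simpa [vsub_eq_sub, vadd_eq_add, add_comm] using this
      have hys2 : 0 < ys.2 := by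
        rw [hys, Prod.snd_add, Prod.smul_snd, hx'2, smul_eq_mul, hq12, mul_one, zero_add]
        exact hspos
      have hdys : dist ys x' = s * ‖q1‖ := by
        rw [hys, dist_eq_norm]
        have : x' + s • q1 - x' = s • q1 := by abel
        rw [this, norm_smul, Real.norm_eq_abs, abs_of_pos hspos]
      have hsmall : s * ‖q1‖ < min ε (r/2) := by
        have h1 : s * (‖q1‖ + 1) ≤ ε / 2 := by
          have := min_le_left (ε / (2 * (‖q1‖ + 1))) ((r/2) / (2 * (‖q1‖ + 1)))
          rw [← hs] at this
          have h2 : s * (2 * (‖q1‖ + 1)) ≤ ε := by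
            rw [← le_div_iff₀ (by positivity)]
            calc s ≤ ε / (2 * (‖q1‖ + 1)) := this
              _ = ε / (2 * (‖q1‖ + 1)) := rfl
          linarith
        have h1' : s * (‖q1‖ + 1) ≤ (r/2) / 2 := by
          have := min_le_right (ε / (2 * (‖q1‖ + 1))) ((r/2) / (2 * (‖q1‖ + 1)))
          rw [← hs] at this
          have h2 : s * (2 * (‖q1‖ + 1)) ≤ r/2 := by
            rw [← le_div_iff₀ (by positivity)]; exact this
          linarith
        have h3 : s * ‖q1‖ < s * (‖q1‖ + 1) := by nlinarith
        apply lt_min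
        · calc s * ‖q1‖ < s * (‖q1‖ + 1) := h3
            _ ≤ ε / 2 := h1
            _ < ε := by linarith
        · calc s * ‖q1‖ < s * (‖q1‖ + 1) := h3
            _ ≤ (r/2)/2 := h1'
            _ < r/2 := by linarith
      have hysr : dist ys p < r := by
        calc dist ys p ≤ dist ys x' + dist x' p := dist_triangle _ _ _
          _ < min ε (r/2) + r/2 := by
              rw [hdys]
              exact add_lt_add hsmall hx'r
          _ ≤ r/2 + r/2 := by
              have := min_le_right ε (r/2)
              linarith
          _ = r := by ring
      have hysτ : ys ∈ τ := hN ys hys_span hys2 hysr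
      refine ⟨ys, hysτ, ?_⟩
      rw [dist_comm, hdys]
      exact lt_of_lt_of_le hsmall (min_le_left _ _)
    -- conclude
    refine ⟨τ, hτQ, ⟨q1.1, ?_⟩, ?_⟩
    · have he : ((q1.1, (1:ℝ)) : (Fin n → ℝ) × ℝ) = q1 := by
        rw [← hq12]
      rw [he]; exact hq1τ
    · apply Subset.antisymm
      · exact fun y hy => ⟨hστ hy, hσ0 y hy⟩
      · rintro w ⟨hwτ, hw2⟩
        by_contra hwσ
        obtain ⟨_, ⟨hne', z, hz⟩⟩ := hcommon σ hσ τ hτQ ⟨p, hpσ, hpτ'⟩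
        rw [inter_eq_self_of_subset_left hστ] at hz
        have hpface : p ∈ faceSet τ z := hz ▸ hpσ
        have hzp : ∀ v ∈ τ, z p ≤ z v := hpface.2
        have hwface : w ∉ faceSet τ z := by rw [← hz]; exact hwσ
        have hex : ∃ v ∈ τ, z v < z w := by
          by_contra hcon
          push_neg at hcon
          exact hwface ⟨hwτ, hcon⟩
        obtain ⟨v, hvτ, hvw⟩ := hex
        have hzw : z p < z w := lt_of_le_of_lt (hzp v hvτ) hvw
        set t : ℝ := (r/2) / (2 * (‖p - w‖ + 1)) with htdef
        have htpos : 0 < t := by positivity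
        set xs := p + t • (p - w) with hxs
        have hxs_span : xs ∈ affineSpan ℝ τ := by
          have := (affineSpan ℝ τ).smul_vsub_vadd_mem t (subset_affineSpan ℝ τ hpτ')
            (subset_affineSpan ℝ τ hwτ) (subset_affineSpan ℝ τ hpτ')
          simpa [vsub_eq_sub, vadd_eq_add, add_comm] using this
        have hxs2 : xs.2 = 0 := by
          rw [hxs, Prod.snd_add, Prod.smul_snd, Prod.snd_sub, hp2, hw2, smul_eq_mul]
          ring
        have hxsr : dist xs p < r/2 := by
          have he : xs - p = t • (p - w) := by rw [hxs]; abel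
          rw [dist_eq_norm, he, norm_smul, Real.norm_eq_abs, abs_of_pos htpos]
          have h1 : t * (2 * (‖p - w‖ + 1)) ≤ r/2 := by
            rw [← le_div_iff₀ (by positivity)]
          nlinarith [norm_nonneg (p - w), mul_pos htpos
            (show (0:ℝ) < ‖p - w‖ + 2 by positivity)]
        have hxsτ : xs ∈ τ := hC xs hxs_span hxs2 hxsr
        have h1 : z p ≤ z xs := hzp xs hxsτ
        have h2 : z xs = z p + t * (z p - z w) := by
          rw [hxs, map_add, map_smul, map_sub, smul_eq_mul]
        nlinarith [mul_pos htpos (sub_pos.mpr hzw)]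
  -- assembly
  ext C
  constructor
  · intro hC
    rcases hC with h | h
    · obtain ⟨L, hL, rfl⟩ := h
      obtain ⟨⟨u, hu⟩, σ', hσ'Q, rfl⟩ := hL
      rw [hconeeq σ' hσ'Q u hu]
      exact hσ'Q
    · obtain ⟨L, hL, rfl⟩ := h
      obtain ⟨⟨u, hu⟩, σ', hσ'Q, rfl⟩ := hL
      rw [hreceq σ' hσ'Q u hu, hprodeq σ']
      exact hzface σ' hσ'Q
  · intro hC
    by_cases hA : ∀ y ∈ C, y.2 = (0:ℝ)
    · obtain ⟨τ, hτQ, ⟨u0, hu0⟩, heq⟩ := hhard C hC hA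
      refine Or.inr ⟨{u | (u,(1:ℝ)) ∈ τ}, ⟨⟨u0, hu0⟩, τ, hτQ, rfl⟩, ?_⟩
      rw [hreceq τ hτQ u0 hu0, hprodeq τ, heq]
    · push_neg at hA
      obtain ⟨y, hyC, hy2⟩ := hA
      have hy2pos : 0 < y.2 := lt_of_le_of_ne (hht C hC y hyC) (Ne.symm hy2)
      have hq1C : (y.2)⁻¹ • y ∈ C := hsmul C hC _ (by positivity) _ hyC
      have h2 : ((y.2)⁻¹ • y).2 = 1 := by
        rw [Prod.smul_snd, smul_eq_mul, inv_mul_cancel₀ hy2pos.ne']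
      have hu0 : ((((y.2)⁻¹ • y).1, (1:ℝ)) : (Fin n → ℝ) × ℝ) ∈ C := by
        have he : ((((y.2)⁻¹ • y).1, (1:ℝ)) : (Fin n → ℝ) × ℝ) = (y.2)⁻¹ • y := by
          rw [← h2]
        rw [he]; exact hq1C
      exact Or.inl ⟨{u | (u,(1:ℝ)) ∈ C}, ⟨⟨_, hu0⟩, C, hC, rfl⟩, (hconeeq C hC _ hu0).symm⟩
end
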